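/- arXiv:1802.01256 — 9 statements merged into one kernel-verified Lean document; each statement's English description precedes it below -/
import Mathlib

section
/- Let n, k be positive integers with k ≥ n, and let y ∈ ℝ^k satisfy y_k ≠ 0 (last entry nonzero). Suppose z, z' ∈ ℝ^{n+k} both have last k entries equal to y, i.e. z_{n+l} = z'_{n+l} = y_l for l = 1,…,k. If the (linear) autocorrelations of z and z' agree at lags t = n, n+1, …, n+k−1, i.e. a_t(z) = a_t(z') for those t, then z = z'. (In particular, a signal x ∈ ℝⁿ combined with known background y is uniquely determined by the autocorrelation of (x; y).) -/
/-!
At lag `n + k - 1 - i` with `i < n ≤ k`, the autocorrelation of `(x; y)` only pairs the entries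
`x_0, …, x_i` with entries of `y`, and `x_i` meets the last entry `y_{k-1} ≠ 0`. So the lags
`n + k - 1, n + k - 2, …, k` form a lower-triangular linear system in `x` with nonzero diagonal,
which determines `x_0, x_1, …` one after the other.
-/

/-- Linear autocorrelation at lag `t` of a length-`N` real vector
(entries indexed `0, …, N-1`): `a_t(z) = ∑_{p=0}^{N-t-1} z_p z_{p+t}`. -/
noncomputable def acorr (N : ℕ) (z : ℕ → ℝ) (t : ℕ) : ℝ :=
  ∑ p ∈ Finset.range (N - t), z p * z (p + t)

open Finset

theorem eq_of_lowerTriangular_sums_eq {R : Type*} [Ring R] [NoZeroDivisors R] {n : ℕ}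
    {c : ℕ → ℕ → R} (hc : ∀ i < n, c i i ≠ 0) {u v : ℕ → R}
    (h : ∀ i < n, ∑ p ∈ range (i + 1), u p * c i p = ∑ p ∈ range (i + 1), v p * c i p) :
    ∀ i < n, u i = v i := by
  intro i
  induction i using Nat.strong_induction_on with
  | _ i ih =>
    intro hi
    have hlower : ∑ p ∈ range i, u p * c i p = ∑ p ∈ range i, v p * c i p :=
      sum_congr rfl fun p hp ↦ by rw [ih p (mem_range.mp hp) (by grind)]
    have hdiag : u i * c i i = v i * c i i := by
      simpa only [sum_range_succ, hlower, add_left_cancel_iff] using h i hi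
    exact mul_right_cancel₀ (hc i hi) hdiag

theorem acorr_eq_sum_mul_of_tail_eq {n k : ℕ} {y z : ℕ → ℝ} (hz : ∀ l < k, z (n + l) = y l)
    {i : ℕ} (hi : i < k) :
    acorr (n + k) z (n + (k - 1 - i)) = ∑ p ∈ range (i + 1), z p * y (p + (k - 1 - i)) := by
  rw [acorr, show n + k - (n + (k - 1 - i)) = i + 1 by omega]
  refine sum_congr rfl fun p hp ↦ ?_
  rw [show p + (n + (k - 1 - i)) = n + (p + (k - 1 - i)) by ring, hz _ (by grind)]

theorem stmt0_general (n k : ℕ) (hk : n ≤ k)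
    (y : ℕ → ℝ) (hy : y (k - 1) ≠ 0)
    (z z' : ℕ → ℝ)
    (hz : ∀ l < k, z (n + l) = y l)
    (hz' : ∀ l < k, z' (n + l) = y l)
    (ha : ∀ t, n ≤ t → t ≤ n + k - 1 → acorr (n + k) z t = acorr (n + k) z' t) :
    ∀ i < n + k, z i = z' i := by
  have hsignal : ∀ i < n, z i = z' i := by
    refine eq_of_lowerTriangular_sums_eq (c := fun i p ↦ y (p + (k - 1 - i)))
      (fun i hi ↦ by rwa [show i + (k - 1 - i) = k - 1 by omega]) fun i hi ↦ ?_
    rw [← acorr_eq_sum_mul_of_tail_eq hz (by omega), ← acorr_eq_sum_mul_of_tail_eq hz' (by omega)]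
    exact ha _ (by omega) (by omega)
  intro i hi
  rcases lt_or_ge i n with hin | hin
  · exact hsignal i hin
  · obtain ⟨l, rfl⟩ := Nat.exists_eq_add_of_le hin
    rw [hz l (by omega), hz' l (by omega)]

/-- If `z, z' ∈ ℝ^{n+k}` both have their last `k` entries equal to the background `y`
(with `k ≥ n` and last entry of `y` nonzero), and their linear autocorrelations agree
at lags `t = n, …, n+k-1`, then `z = z'`. -/
theorem stmt0 (n k : ℕ) (hn : 0 < n) (hk : n ≤ k)
    (y : ℕ → ℝ) (hy : y (k - 1) ≠ 0)
    (z z' : ℕ → ℝ)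
    (hz : ∀ l < k, z (n + l) = y l)
    (hz' : ∀ l < k, z' (n + l) = y l)
    (ha : ∀ t, n ≤ t → t ≤ n + k - 1 → acorr (n + k) z t = acorr (n + k) z' t) :
    ∀ i < n + k, z i = z' i :=
  stmt0_general n k hk y hy z z' hz hz' ha
end

section
/- Let n, k be positive integers, N = n+k, and let m be an integer with m ≥ 2N − 2. Let z, z' ∈ ℝ^N and let ẑ, ẑ' ∈ ℝ^m be their zero-paddings (first N entries equal to z resp. z', remaining m−N entries zero). If the m-point DFT magnitudes agree, |(F ẑ)_i| = |(F ẑ')_i| for all i = 0,…,m−1, then the linear autocorrelations agree: a_t(z) = a_t(z') for all t = 0,…,N−1. (The autocorrelation can be computed from the inverse Fourier transform of the measured power spectrum when the spectrum is oversampled with m ≥ 2N−2.) -/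
/-- The `m`-point discrete Fourier transform of `w` (entries indexed `0, …, m-1`):
`(F w)_i = ∑_{l=0}^{m-1} w_l · exp(-2πι i l / m)`. -/
noncomputable def dft (m : ℕ) (w : ℕ → ℂ) (i : ℕ) : ℂ :=
  ∑ l ∈ Finset.range m,
    w l * Complex.exp (-((2 : ℂ) * (Real.pi : ℂ) * Complex.I * (i : ℂ) * (l : ℂ)) / (m : ℂ))

open Finset Complex Real

section Aux

/-- Orthogonality of discrete complex exponentials. -/
lemma orth_aux (m : ℕ) (hm : 0 < m) (s t : ℕ) (hs : s < m) (ht : t < m) :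
    ∑ i ∈ Finset.range m,
      Complex.exp ((2*(π:ℂ)*I*i*s)/m) * Complex.exp (-((2:ℂ)*(π:ℂ)*I*i*t)/m)
      = if s = t then (m:ℂ) else 0 := by
  have hm' : (m:ℂ) ≠ 0 := Nat.cast_ne_zero.2 hm.ne'
  have hπ : (π:ℂ) ≠ 0 := by exact_mod_cast Real.pi_ne_zero
  set u : ℂ := Complex.exp ((2*(π:ℂ)*I*((s:ℂ)-t))/m) with hu
  have hterm : ∀ i : ℕ, Complex.exp ((2*(π:ℂ)*I*i*s)/m) *
      Complex.exp (-((2:ℂ)*(π:ℂ)*I*i*t)/m) = u ^ i := by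
    intro i
    rw [← Complex.exp_add, ← Complex.exp_nat_mul]
    congr 1
    field_simp
    ring
  simp only [hterm]
  rcases eq_or_ne s t with h | h
  · subst h
    simp only [sub_self, mul_zero, zero_div, hu, zero_mul, mul_zero]
    norm_num [Complex.exp_zero]
  · rw [if_neg h]
    have hu1 : u ≠ 1 := by
      intro h1
      rw [hu, Complex.exp_eq_one_iff] at h1
      obtain ⟨j, hj⟩ := h1
      have h2πI : (2*(π:ℂ)*I) ≠ 0 := by
        simp [hπ, Complex.I_ne_zero]
      have h2 : (s:ℂ) - t = j * m := by
        field_simp at hj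
        apply mul_left_cancel₀ h2πI
        rw [hj]; ring
      have h3 : (s:ℤ) - t = j * m := by exact_mod_cast h2
      have h5 : -(m:ℤ) < j * m := by rw [← h3]; omega
      have h6 : j * m < (m:ℤ) := by rw [← h3]; omega
      have hj0 : j = 0 := by
        rcases lt_trichotomy j 0 with h' | h' | h'
        · nlinarith [mul_le_mul_of_nonneg_right (show j ≤ -1 by omega) (show (0:ℤ) ≤ m by positivity)]
        · exact h'
        · nlinarith [mul_le_mul_of_nonneg_right (show (1:ℤ) ≤ j by omega) (show (0:ℤ) ≤ m by positivity)]
      rw [hj0] at h3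
      omega
    rw [geom_sum_eq hu1]
    have hum : u ^ m = 1 := by
      rw [hu, ← Complex.exp_nat_mul]
      have h4 : (m:ℂ) * (2*(π:ℂ)*I*((s:ℂ)-t)/m) = (((s:ℤ)-(t:ℤ) : ℤ) : ℂ) * (2*π*I) := by
        push_cast; field_simp
      rw [h4, Complex.exp_int_mul_two_pi_mul_I]
    rw [hum, sub_self, zero_div]

/-- Injectivity of the discrete Fourier transform. -/
lemma dft_inj_aux (m : ℕ) (hm : 0 < m) (c c' : ℕ → ℂ)
    (h : ∀ i < m,
      ∑ t ∈ Finset.range m, c t * Complex.exp (-((2:ℂ)*(π:ℂ)*I*i*t)/m) =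
      ∑ t ∈ Finset.range m, c' t * Complex.exp (-((2:ℂ)*(π:ℂ)*I*i*t)/m)) :
    ∀ s < m, c s = c' s := by
  have hm' : (m:ℂ) ≠ 0 := Nat.cast_ne_zero.2 hm.ne'
  intro s hs
  have key : ∀ d : ℕ → ℂ,
      ∑ i ∈ Finset.range m, Complex.exp ((2*(π:ℂ)*I*i*s)/m) *
        (∑ t ∈ Finset.range m, d t * Complex.exp (-((2:ℂ)*(π:ℂ)*I*i*t)/m))
      = (m:ℂ) * d s := by
    intro d
    have h1 : ∀ i ∈ Finset.range m, Complex.exp ((2*(π:ℂ)*I*i*s)/m) *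
        (∑ t ∈ Finset.range m, d t * Complex.exp (-((2:ℂ)*(π:ℂ)*I*i*t)/m))
        = ∑ t ∈ Finset.range m, d t *
            (Complex.exp ((2*(π:ℂ)*I*i*s)/m) * Complex.exp (-((2:ℂ)*(π:ℂ)*I*i*t)/m)) := by
      intro i _
      rw [Finset.mul_sum]
      exact Finset.sum_congr rfl fun t _ => by ring
    rw [Finset.sum_congr rfl h1, Finset.sum_comm]
    have h2 : ∀ t ∈ Finset.range m,
        ∑ i ∈ Finset.range m, d t *
          (Complex.exp ((2*(π:ℂ)*I*i*s)/m) * Complex.exp (-((2:ℂ)*(π:ℂ)*I*i*t)/m))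
        = d t * (if s = t then (m:ℂ) else 0) := by
      intro t ht
      rw [← Finset.mul_sum, orth_aux m hm s t hs (Finset.mem_range.1 ht)]
    rw [Finset.sum_congr rfl h2]
    rw [Finset.sum_eq_single s]
    · simp [mul_comm]
    · intro t _ hts
      simp [Ne.symm hts]
    · intro hsm
      exact absurd (Finset.mem_range.2 hs) hsm
  have h1 := key c
  have h2 := key c'
  rw [Finset.sum_congr rfl (fun i hi => by rw [h i (Finset.mem_range.1 hi)])] at h1
  rw [h2] at h1
  exact (mul_left_cancel₀ hm' h1.symm)

lemma reindex_mod (m q : ℕ) (hm : 0 < m) (hq : q < m) (g : ℕ → ℂ) :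
    ∑ l ∈ Finset.range m, g l = ∑ s ∈ Finset.range m, g ((q + s) % m) := by
  have key : ∀ l < m, (q + (l + (m - q)) % m) % m = l := by
    intro l hl
    rw [Nat.add_mod_mod]
    have : q + (l + (m - q)) = l + m := by omega
    rw [this, Nat.add_mod_right, Nat.mod_eq_of_lt hl]
  refine Finset.sum_nbij' (fun l => (l + (m - q)) % m) (fun s => (q + s) % m) ?_ ?_ ?_ ?_ ?_
  · intro a _; exact Finset.mem_range.2 (Nat.mod_lt _ hm)
  · intro a _; exact Finset.mem_range.2 (Nat.mod_lt _ hm)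
  · intro a ha; exact key a (Finset.mem_range.1 ha)
  · intro a ha
    show ((q + a) % m + (m - q)) % m = a
    rw [Nat.mod_add_mod]
    have : q + a + (m - q) = a + m := by omega
    rw [this, Nat.add_mod_right, Nat.mod_eq_of_lt (Finset.mem_range.1 ha)]
  · intro a ha
    rw [key a (Finset.mem_range.1 ha)]

lemma term_exp (m q s i : ℕ) (hm : 0 < m) (w : ℕ → ℝ) :
    (w q : ℂ) * Complex.exp ((2*(π:ℂ)*I*i*q)/m) *
      ((w ((q + s) % m) : ℂ) * Complex.exp (-((2:ℂ)*(π:ℂ)*I*i*((q+s) % m : ℕ))/m))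
    = ((w q : ℂ) * (w ((q + s) % m) : ℂ)) * Complex.exp (-((2:ℂ)*(π:ℂ)*I*i*s)/m) := by
  have hm' : (m:ℂ) ≠ 0 := Nat.cast_ne_zero.2 hm.ne'
  set r := (q + s) % m with hrdef
  set d := (q + s) / m with hddef
  have hr : r + m * d = q + s := Nat.mod_add_div _ _
  have hrc : (r:ℂ) = (q:ℂ) + s - m*d := by
    have := congrArg (Nat.cast : ℕ → ℂ) hr
    push_cast at this
    linear_combination this
  have hexp : Complex.exp ((2*(π:ℂ)*I*i*q)/m) * Complex.exp (-((2:ℂ)*(π:ℂ)*I*i*(r:ℕ))/m)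
      = Complex.exp ((((i*d : ℕ) : ℤ) : ℂ) * (2*(π:ℂ)*I)) * Complex.exp (-((2:ℂ)*(π:ℂ)*I*i*s)/m) := by
    rw [← Complex.exp_add, ← Complex.exp_add]
    congr 1
    push_cast
    rw [hrc]
    field_simp
    ring
  calc (w q : ℂ) * Complex.exp ((2*(π:ℂ)*I*i*q)/m) *
      ((w r : ℂ) * Complex.exp (-((2:ℂ)*(π:ℂ)*I*i*(r:ℕ))/m))
      = ((w q : ℂ) * (w r : ℂ)) * (Complex.exp ((2*(π:ℂ)*I*i*q)/m) * Complex.exp (-((2:ℂ)*(π:ℂ)*I*i*(r:ℕ))/m)) := by ring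
    _ = ((w q : ℂ) * (w r : ℂ)) * Complex.exp (-((2:ℂ)*(π:ℂ)*I*i*s)/m) := by
        rw [hexp, Complex.exp_int_mul_two_pi_mul_I, one_mul]

/-- The squared modulus of the DFT is the DFT of the cyclic autocorrelation. -/
lemma dft_sq (m : ℕ) (hm : 0 < m) (w : ℕ → ℝ) (i : ℕ) :
    dft m (fun p => (w p : ℂ)) i * (starRingEnd ℂ) (dft m (fun p => (w p : ℂ)) i)
    = ∑ s ∈ Finset.range m,
        (∑ q ∈ Finset.range m, ((w q : ℂ) * (w ((q + s) % m) : ℂ))) *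
          Complex.exp (-((2:ℂ)*(π:ℂ)*I*i*s)/m) := by
  have hconj : (starRingEnd ℂ) (dft m (fun p => (w p : ℂ)) i)
      = ∑ q ∈ Finset.range m, (w q : ℂ) * Complex.exp ((2*(π:ℂ)*I*i*q)/m) := by
    rw [dft, map_sum]
    refine Finset.sum_congr rfl fun l _ => ?_
    rw [map_mul, Complex.conj_ofReal, ← Complex.exp_conj]
    congr 1
    simp only [map_div₀, map_neg, map_mul, Complex.conj_I, Complex.conj_ofReal,
      Complex.conj_natCast, map_ofNat]
    ring
  rw [mul_comm, hconj]
  conv_lhs => rw [dft]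
  rw [Finset.sum_mul_sum]
  have hre : ∀ q ∈ Finset.range m,
      ∑ l ∈ Finset.range m, ((w q : ℂ) * Complex.exp ((2*(π:ℂ)*I*i*q)/m)) *
        ((w l : ℂ) * Complex.exp (-((2:ℂ)*(π:ℂ)*I*i*(l:ℕ))/m))
      = ∑ s ∈ Finset.range m, ((w q : ℂ) * (w ((q + s) % m) : ℂ)) *
          Complex.exp (-((2:ℂ)*(π:ℂ)*I*i*s)/m) := by
    intro q hq
    rw [reindex_mod m q hm (Finset.mem_range.1 hq)]
    exact Finset.sum_congr rfl fun s _ => term_exp m q s i hm w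
  rw [Finset.sum_congr rfl hre, Finset.sum_comm]
  exact Finset.sum_congr rfl fun s _ => (Finset.sum_mul _ _ _).symm

/-- The cyclic autocorrelation of the zero-padding in terms of linear autocorrelations. -/
lemma cyc_eq (N m t : ℕ) (hN : 2 ≤ N) (h2 : 2*N - 2 ≤ m) (ht : t < N) (z : ℕ → ℝ) :
    (∑ q ∈ Finset.range m,
      (if q < N then z q else 0) * (if (q + t) % m < N then z ((q + t) % m) else 0))
    = acorr N z t + acorr N z (m - t) := by
  have hNm : N ≤ m := by omega
  rw [← Finset.sum_subset (Finset.range_subset_range.2 hNm)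
    (by intro q hq hq'
        rw [Finset.mem_range] at hq'
        push_neg at hq'
        rw [if_neg (by omega), zero_mul])]
  have hterm : ∀ q ∈ Finset.range N,
      (if q < N then z q else 0) * (if (q + t) % m < N then z ((q + t) % m) else 0)
      = if q < N - t then z q * z (q + t) else if q + t = m then z q * z 0 else 0 := by
    intro q hq
    rw [Finset.mem_range] at hq
    rw [if_pos hq]
    rcases lt_or_ge q (N - t) with h | h
    · rw [Nat.mod_eq_of_lt (show q + t < m by omega),
        if_pos (show q + t < N by omega), if_pos h]
    · rcases eq_or_ne (q + t) m with he | he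
      · rw [show (q + t) % m = 0 by rw [he, Nat.mod_self],
          if_pos (show 0 < N by omega), if_neg (show ¬ q < N - t by omega), if_pos he]
      · rw [Nat.mod_eq_of_lt (show q + t < m by omega),
          if_neg (show ¬ q + t < N by omega), if_neg (show ¬ q < N - t by omega),
          if_neg he, mul_zero]
  rw [Finset.sum_congr rfl hterm]
  rw [Finset.range_eq_Ico, ← Finset.sum_Ico_consecutive _ (Nat.zero_le (N - t)) (by omega : N - t ≤ N)]
  congr 1
  · rw [← Finset.range_eq_Ico, acorr]
    refine Finset.sum_congr rfl fun p hp => ?_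
    rw [Finset.mem_range] at hp
    rw [if_pos hp]
  · rw [acorr]
    have hcond : ∀ q ∈ Finset.Ico (N - t) N,
        (if q < N - t then z q * z (q + t) else if q + t = m then z q * z 0 else 0)
        = if q + t = m then z q * z 0 else 0 := by
      intro q hq
      rw [Finset.mem_Ico] at hq
      rw [if_neg (by omega)]
    rw [Finset.sum_congr rfl hcond]
    rcases le_or_gt N (m - t) with hc | hc
    · rw [show N - (m - t) = 0 by omega, Finset.range_zero, Finset.sum_empty]
      refine Finset.sum_eq_zero fun q hq => ?_
      rw [Finset.mem_Ico] at hq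
      rw [if_neg (by omega)]
    · have hmt : m - t = t ∧ t = N - 1 ∧ m = 2*N-2 := by omega
      obtain ⟨h1, h2', h3⟩ := hmt
      rw [show N - (m - t) = 1 by omega, Finset.sum_range_one]
      have hcond2 : ∀ q ∈ Finset.Ico (N - t) N,
          (if q + t = m then z q * z 0 else 0) = if q = N - 1 then z q * z 0 else 0 := by
        intro q hq
        congr 1
        simp only [eq_iff_iff]
        omega
      rw [Finset.sum_congr rfl hcond2, Finset.sum_ite_eq' (Finset.Ico (N - t) N) (N-1)
        (fun q => z q * z 0)]
      rw [if_pos (Finset.mem_Ico.2 ⟨by omega, by omega⟩)]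
      rw [show 0 + (m - t) = N - 1 by omega]
      ring

end Aux

/-- With `N = n + k` and oversampling `m ≥ 2N - 2`, if the `m`-point DFT magnitudes of the
zero-paddings of `z` and `z'` agree, then the linear autocorrelations of `z` and `z'`
agree at every lag `t = 0, …, N-1`. -/
theorem stmt1 (n k m : ℕ) (hn : 0 < n) (hk : 0 < k)
    (hm : 2 * (n + k) - 2 ≤ m)
    (z z' : ℕ → ℝ)
    (hb : ∀ i < m,
      ‖dft m (fun p => if p < n + k then (z p : ℂ) else 0) i‖ =
      ‖dft m (fun p => if p < n + k then (z' p : ℂ) else 0) i‖) :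
    ∀ t < n + k, acorr (n + k) z t = acorr (n + k) z' t := by
  set N := n + k with hNdef
  have hN : 2 ≤ N := by omega
  have hm0 : 0 < m := by omega
  have hNm : N ≤ m := by omega
  set w : ℕ → ℝ := fun p => if p < N then z p else 0 with hw
  set w' : ℕ → ℝ := fun p => if p < N then z' p else 0 with hw'
  have hzw : (fun p => if p < N then (z p : ℂ) else 0) = fun p => ((w p : ℝ) : ℂ) := by
    funext p
    simp only [hw, apply_ite (fun x : ℝ => (x : ℂ)), Complex.ofReal_zero]
  have hzw' : (fun p => if p < N then (z' p : ℂ) else 0) = fun p => ((w' p : ℝ) : ℂ) := by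
    funext p
    simp only [hw', apply_ite (fun x : ℝ => (x : ℂ)), Complex.ofReal_zero]
  -- equality of the DFTs of the cyclic autocorrelations
  have key : ∀ i < m,
      ∑ s ∈ Finset.range m,
        (∑ q ∈ Finset.range m, ((w q : ℂ) * (w ((q + s) % m) : ℂ))) *
          Complex.exp (-((2:ℂ)*(π:ℂ)*I*i*s)/m)
      = ∑ s ∈ Finset.range m,
        (∑ q ∈ Finset.range m, ((w' q : ℂ) * (w' ((q + s) % m) : ℂ))) *
          Complex.exp (-((2:ℂ)*(π:ℂ)*I*i*s)/m) := by
    intro i hi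
    rw [← dft_sq m hm0 w i, ← dft_sq m hm0 w' i]
    rw [Complex.mul_conj, Complex.mul_conj, ← Complex.sq_norm, ← Complex.sq_norm,
      ← hzw, ← hzw', hb i hi]
  have hc := dft_inj_aux m hm0 _ _ key
  intro t ht
  have hct := hc t (by omega)
  have e1 : ∀ (y : ℕ → ℝ),
      ((∑ q ∈ Finset.range m,
        (if q < N then y q else 0) * (if (q + t) % m < N then y ((q + t) % m) else 0) : ℝ) : ℂ)
      = ∑ q ∈ Finset.range m,
          (((if q < N then y q else 0 : ℝ) : ℂ) * ((if (q + t) % m < N then y ((q + t) % m) else 0 : ℝ) : ℂ)) := by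
    intro y
    push_cast
    rfl
  have e2 : ((acorr N z t + acorr N z (m - t) : ℝ) : ℂ)
      = ((acorr N z' t + acorr N z' (m - t) : ℝ) : ℂ) := by
    rw [← cyc_eq N m t hN hm ht z, ← cyc_eq N m t hN hm ht z', e1 z, e1 z']
    exact hct
  have e3 : acorr N z t + acorr N z (m - t) = acorr N z' t + acorr N z' (m - t) :=
    Complex.ofReal_inj.1 e2
  rcases le_or_gt N (m - t) with hc' | hc'
  · have hz0 : acorr N z (m - t) = 0 := by
      rw [acorr, show N - (m - t) = 0 by omega, Finset.range_zero, Finset.sum_empty]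
    have hz0' : acorr N z' (m - t) = 0 := by
      rw [acorr, show N - (m - t) = 0 by omega, Finset.range_zero, Finset.sum_empty]
    rw [hz0, hz0'] at e3
    linarith
  · have hmt : m - t = t := by omega
    rw [hmt] at e3
    linarith
end

section
/- (Main uniqueness theorem with oversampling.) Let n, k be positive integers with k ≥ n, let y ∈ ℝ^k with y_k ≠ 0, and let m be an integer with m ≥ 2(n+k) − 2. For x ∈ ℝⁿ let ẑ(x) ∈ ℝ^m denote the zero-padded combination (x_1,…,x_n, y_1,…,y_k, 0,…,0). If x, x' ∈ ℝⁿ satisfy |(F ẑ(x))_i| = |(F ẑ(x'))_i| for all i = 0,…,m−1, then x = x'. That is, the signal is uniquely determined (with no trivial ambiguities) by the Fourier magnitude measurements together with the background y. -/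
open Complex Finset


/-- The zero-padded combination `ẑ(x) = (x_0, …, x_{n-1}, y_0, …, y_{k-1}, 0, …, 0)`
of the signal `x ∈ ℝⁿ` with the background `y ∈ ℝᵏ`, viewed in `ℂ`. -/
noncomputable def zhat (n k : ℕ) (y x : ℕ → ℝ) (p : ℕ) : ℂ :=
  if p < n then (x p : ℂ) else if p < n + k then (y (p - n) : ℂ) else 0

/-- Main uniqueness theorem with oversampling: if `k ≥ n`, the last entry of the background
`y` is nonzero, and `m ≥ 2(n+k) - 2`, then equality of all `m` Fourier magnitude measurements
of the zero-padded combinations forces `x = x'`. -/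
theorem stmt2 (n k m : ℕ) (hn : 0 < n) (hk : n ≤ k)
    (y : ℕ → ℝ) (hy : y (k - 1) ≠ 0)
    (hm : 2 * (n + k) - 2 ≤ m)
    (x x' : ℕ → ℝ)
    (hb : ∀ i < m,
      ‖dft m (zhat n k y x) i‖ = ‖dft m (zhat n k y x') i‖) :
    ∀ i < n, x i = x' i := by
  set L := n + k with hLdef
  have hL2 : 2 ≤ L := by omega
  have hm0 : m ≠ 0 := by omega
  have hLm : L ≤ m := by omega
  set ω : ℂ := Complex.exp (-(2 * Real.pi * Complex.I) / m) with hωdef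
  have hprim : IsPrimitiveRoot ω m := by
    have h := Complex.isPrimitiveRoot_exp m hm0
    have he : ω = (Complex.exp (2 * Real.pi * Complex.I / m))⁻¹ := by
      rw [← Complex.exp_neg, hωdef]; congr 1; ring
    rw [he]; exact h.inv
  have hωm : ω ^ m = 1 := hprim.pow_eq_one
  have hω0 : ω ≠ 0 := by
    intro h
    have := hωm
    rw [h, zero_pow hm0] at this
    exact zero_ne_one this
  -- exp-to-pow
  have hpow : ∀ i l : ℕ,
      Complex.exp (-((2 : ℂ) * (Real.pi : ℂ) * Complex.I * (i : ℂ) * (l : ℂ)) / (m : ℂ))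
        = ω ^ (i * l) := by
    intro i l
    rw [hωdef, ← Complex.exp_nat_mul]
    congr 1
    push_cast
    ring
  -- mod for powers
  have hmodpow : ∀ e : ℕ, ω ^ e = ω ^ (e % m) := by
    intro e
    conv_lhs => rw [← Nat.div_add_mod e m]
    rw [pow_add, pow_mul, hωm, one_pow, one_mul]
  -- dft restricted to support, as powers
  have hdft : ∀ w : ℕ → ℂ, (∀ p, L ≤ p → w p = 0) → ∀ i,
      dft m w i = ∑ l ∈ range L, w l * ω ^ (i * l) := by
    intro w h0 i
    rw [dft]
    rw [← Finset.sum_subset (Finset.range_subset_range.2 hLm)]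
    · exact Finset.sum_congr rfl fun l _ => by rw [hpow]
    · intro p _ hp
      rw [h0 p (by simpa using hp), zero_mul]
  -- conj ω = ω⁻¹
  have hconjω : (starRingEnd ℂ) ω = ω⁻¹ := by
    rw [hωdef, ← Complex.exp_conj, ← Complex.exp_neg]
    congr 1
    simp [map_div₀, map_ofNat]
    ring
  -- z facts
  have hsupp : ∀ v : ℕ → ℝ, ∀ p, L ≤ p → zhat n k y v p = 0 := by
    intro v p hp
    rw [zhat, if_neg (by omega), if_neg (by omega)]
  have hreal : ∀ v : ℕ → ℝ, ∀ p, (starRingEnd ℂ) (zhat n k y v p) = zhat n k y v p := by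
    intro v p
    rw [zhat]
    split
    · exact Complex.conj_ofReal _
    · split
      · exact Complex.conj_ofReal _
      · exact map_zero _
  -- the double-sum S
  have hS : ∀ w : ℕ → ℂ, (∀ p, L ≤ p → w p = 0) → (∀ p, (starRingEnd ℂ) (w p) = w p) →
      ∀ i, dft m w i * (starRingEnd ℂ) (dft m w i) * ω ^ (i * (L - 1))
        = ∑ l ∈ range L, ∑ l' ∈ range L, w l * w l' * ω ^ (i * (l + (L - 1) - l')) := by
    intro w h0 hre i
    rw [hdft w h0 i, map_sum]
    have hc : ∀ l' ∈ range L, (starRingEnd ℂ) (w l' * ω ^ (i * l'))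
        = w l' * ((ω ^ (i * l'))⁻¹) := by
      intro l' _
      rw [map_mul, hre, map_pow, hconjω, inv_pow]
    rw [Finset.sum_congr rfl hc, Finset.sum_mul_sum, Finset.sum_mul]
    refine Finset.sum_congr rfl fun l hl => ?_
    rw [Finset.sum_mul]
    refine Finset.sum_congr rfl fun l' hl' => ?_
    have hl'L : l' < L := Finset.mem_range.1 hl'
    have hexp : ω ^ (i * (l + (L - 1) - l')) * ω ^ (i * l') = ω ^ (i * l) * ω ^ (i * (L - 1)) := by
      rw [← pow_add, ← pow_add]
      congr 1
      rw [← Nat.mul_add, Nat.sub_add_cancel (by omega), ← Nat.mul_add]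
    have h2 : ω ^ (i * (l + (L - 1) - l')) = ω ^ (i * l) * ω ^ (i * (L - 1)) * (ω ^ (i * l'))⁻¹ := by
      field_simp
      linear_combination hexp
    rw [h2]
    field_simp
  set z := zhat n k y x with hz
  set z' := zhat n k y x' with hz'
  -- S equal
  have key1 : ∀ i < m,
      (∑ l ∈ range L, ∑ l' ∈ range L, z l * z l' * ω ^ (i * (l + (L - 1) - l')))
        = ∑ l ∈ range L, ∑ l' ∈ range L, z' l * z' l' * ω ^ (i * (l + (L - 1) - l')) := by
    intro i hi
    rw [← hS z (hsupp x) (hreal x) i, ← hS z' (hsupp x') (hreal x') i]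
    rw [Complex.mul_conj, Complex.mul_conj, ← Complex.sq_norm, ← Complex.sq_norm, hb i hi]
  -- geometric sums
  have hgeo : ∀ e j : ℕ, j < m →
      (∑ i ∈ range m, (ω ^ e * (ω ^ j)⁻¹) ^ i) = if e % m = j then (m : ℂ) else 0 := by
    intro e j hj
    by_cases hc : e % m = j
    · rw [if_pos hc]
      have h1 : ω ^ e * (ω ^ j)⁻¹ = 1 := by
        rw [hmodpow e, hc, mul_inv_cancel₀ (pow_ne_zero _ hω0)]
      simp [h1]
    · rw [if_neg hc]
      have hne : ω ^ e * (ω ^ j)⁻¹ ≠ 1 := by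
        intro h1
        apply hc
        have : ω ^ (e % m) = ω ^ (j % m) := by
          rw [Nat.mod_eq_of_lt hj, ← hmodpow e]
          field_simp at h1
          exact h1
        exact hprim.pow_inj (Nat.mod_lt _ (Nat.pos_of_ne_zero hm0)) (Nat.mod_lt _ (Nat.pos_of_ne_zero hm0)) this |>.trans (Nat.mod_eq_of_lt hj)
      rw [geom_sum_eq hne]
      have : (ω ^ e * (ω ^ j)⁻¹) ^ m = 1 := by
        rw [mul_pow, inv_pow, ← pow_mul, ← pow_mul, mul_comm e m, mul_comm j m, pow_mul, pow_mul,
          hωm, one_pow, one_pow, inv_one, mul_one]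
      rw [this, sub_self, zero_div]
  -- inversion: T equal
  have key2 : ∀ j < m,
      (∑ l ∈ range L, ∑ l' ∈ range L,
        (if (l + (L - 1) - l') % m = j then z l * z l' else 0))
      = ∑ l ∈ range L, ∑ l' ∈ range L,
        (if (l + (L - 1) - l') % m = j then z' l * z' l' else 0) := by
    intro j hj
    have hT : ∀ w : ℕ → ℂ,
        (∑ i ∈ range m, ((ω ^ j)⁻¹) ^ i *
          (∑ l ∈ range L, ∑ l' ∈ range L, w l * w l' * ω ^ (i * (l + (L - 1) - l'))))
        = (m : ℂ) * ∑ l ∈ range L, ∑ l' ∈ range L,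
            (if (l + (L - 1) - l') % m = j then w l * w l' else 0) := by
      intro w
      have step1 : ∀ i : ℕ, ((ω ^ j)⁻¹) ^ i *
          (∑ l ∈ range L, ∑ l' ∈ range L, w l * w l' * ω ^ (i * (l + (L - 1) - l')))
          = ∑ l ∈ range L, ∑ l' ∈ range L,
              w l * w l' * (ω ^ (l + (L - 1) - l') * (ω ^ j)⁻¹) ^ i := by
        intro i
        rw [Finset.mul_sum]
        refine Finset.sum_congr rfl fun l _ => ?_
        rw [Finset.mul_sum]
        refine Finset.sum_congr rfl fun l' _ => ?_
        rw [pow_mul', mul_pow]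
        ring
      calc (∑ i ∈ range m, ((ω ^ j)⁻¹) ^ i *
          (∑ l ∈ range L, ∑ l' ∈ range L, w l * w l' * ω ^ (i * (l + (L - 1) - l'))))
          = ∑ i ∈ range m, ∑ l ∈ range L, ∑ l' ∈ range L,
              w l * w l' * (ω ^ (l + (L - 1) - l') * (ω ^ j)⁻¹) ^ i :=
            Finset.sum_congr rfl fun i _ => step1 i
        _ = ∑ l ∈ range L, ∑ l' ∈ range L, ∑ i ∈ range m,
              w l * w l' * (ω ^ (l + (L - 1) - l') * (ω ^ j)⁻¹) ^ i := by
            rw [Finset.sum_comm]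
            exact Finset.sum_congr rfl fun l _ => Finset.sum_comm
        _ = ∑ l ∈ range L, ∑ l' ∈ range L,
              w l * w l' * (if (l + (L - 1) - l') % m = j then (m : ℂ) else 0) := by
            refine Finset.sum_congr rfl fun l _ => Finset.sum_congr rfl fun l' _ => ?_
            rw [← Finset.mul_sum, hgeo _ j hj]
        _ = (m : ℂ) * ∑ l ∈ range L, ∑ l' ∈ range L,
              (if (l + (L - 1) - l') % m = j then w l * w l' else 0) := by
            rw [Finset.mul_sum]
            refine Finset.sum_congr rfl fun l _ => ?_
            rw [Finset.mul_sum]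
            refine Finset.sum_congr rfl fun l' _ => ?_
            rw [mul_ite, mul_ite, mul_zero, mul_zero, mul_comm]
    have h3 : (∑ i ∈ range m, ((ω ^ j)⁻¹) ^ i *
          (∑ l ∈ range L, ∑ l' ∈ range L, z l * z l' * ω ^ (i * (l + (L - 1) - l'))))
        = ∑ i ∈ range m, ((ω ^ j)⁻¹) ^ i *
          (∑ l ∈ range L, ∑ l' ∈ range L, z' l * z' l' * ω ^ (i * (l + (L - 1) - l'))) :=
      Finset.sum_congr rfl fun i hi => by rw [key1 i (Finset.mem_range.1 hi)]
    have h4 := (hT z).symm.trans (h3.trans (hT z'))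
    exact mul_left_cancel₀ (Nat.cast_ne_zero.2 hm0) h4
  -- extraction of autocorrelation lags
  have key3 : ∀ v : ℕ → ℝ, ∀ j < n,
      (∑ l ∈ range L, ∑ l' ∈ range L,
        (if (l + (L - 1) - l') % m = j then zhat n k y v l * zhat n k y v l' else 0))
      = (∑ l ∈ range (j + 1), ((v l : ℂ) * ((y (l + k - 1 - j) : ℝ) : ℂ)))
        + (if j = 0 ∧ m = 2 * L - 2 then (((y (k - 1) : ℝ) : ℂ) * (v 0 : ℂ)) else 0) := by
    intro v j hjn
    have hjm : j < m := by omega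
    have hinner : ∀ l ∈ range L, (∑ l' ∈ range L,
        (if (l + (L - 1) - l') % m = j then zhat n k y v l * zhat n k y v l' else 0))
        = (if l ≤ j then zhat n k y v l * zhat n k y v (l + (L - 1) - j) else 0)
          + (if l = L - 1 ∧ j = 0 ∧ m = 2 * L - 2 then zhat n k y v l * zhat n k y v 0 else 0) := by
      intro l hl
      have hlL : l < L := Finset.mem_range.1 hl
      have hcond : ∀ l' < L, ((l + (L - 1) - l') % m = j ↔
          ((l ≤ j ∧ l' = l + (L - 1) - j) ∨ (l = L - 1 ∧ j = 0 ∧ m = 2 * L - 2 ∧ l' = 0))) := by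
        intro l' hl'
        rcases Nat.lt_or_ge (l + (L - 1) - l') m with h | h
        · rw [Nat.mod_eq_of_lt h]
          omega
        · have he : l + (L - 1) - l' = m := by omega
          rw [he, Nat.mod_self]
          omega
      have hstep : ∀ l' ∈ range L,
          (if (l + (L - 1) - l') % m = j then zhat n k y v l * zhat n k y v l' else 0)
          = (if l ≤ j ∧ l' = l + (L - 1) - j then zhat n k y v l * zhat n k y v l' else 0)
            + (if l = L - 1 ∧ j = 0 ∧ m = 2 * L - 2 ∧ l' = 0
                then zhat n k y v l * zhat n k y v l' else 0) := by
        intro l' hl'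
        rw [if_congr (hcond l' (Finset.mem_range.1 hl')) rfl rfl]
        by_cases hA : l ≤ j ∧ l' = l + (L - 1) - j
        · have hB : ¬(l = L - 1 ∧ j = 0 ∧ m = 2 * L - 2 ∧ l' = 0) := by omega
          rw [if_pos (Or.inl hA), if_pos hA, if_neg hB, add_zero]
        · by_cases hB : l = L - 1 ∧ j = 0 ∧ m = 2 * L - 2 ∧ l' = 0
          · rw [if_pos (Or.inr hB), if_neg hA, if_pos hB, zero_add]
          · rw [if_neg (by tauto), if_neg hA, if_neg hB, add_zero]
      rw [Finset.sum_congr rfl hstep, Finset.sum_add_distrib]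
      congr 1
      · by_cases hlj : l ≤ j
        · have : ∀ l' ∈ range L, (if l ≤ j ∧ l' = l + (L - 1) - j
              then zhat n k y v l * zhat n k y v l' else 0)
              = (if l' = l + (L - 1) - j then zhat n k y v l * zhat n k y v l' else 0) := by
            intro l' _
            simp [hlj]
          rw [Finset.sum_congr rfl this, Finset.sum_ite_eq' (range L) (l + (L - 1) - j)
            (fun l' => zhat n k y v l * zhat n k y v l'), if_pos (Finset.mem_range.2 (by omega)),
            if_pos hlj]
        · have : ∀ l' ∈ range L, (if l ≤ j ∧ l' = l + (L - 1) - j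
              then zhat n k y v l * zhat n k y v l' else 0) = 0 := by
            intro l' _
            simp [hlj]
          rw [Finset.sum_congr rfl this, Finset.sum_const_zero, if_neg hlj]
      · by_cases hC : l = L - 1 ∧ j = 0 ∧ m = 2 * L - 2
        · have : ∀ l' ∈ range L, (if l = L - 1 ∧ j = 0 ∧ m = 2 * L - 2 ∧ l' = 0
              then zhat n k y v l * zhat n k y v l' else 0)
              = (if l' = 0 then zhat n k y v l * zhat n k y v l' else 0) := by
            intro l' _
            simp [hC.1, hC.2.1, hC.2.2]
          rw [Finset.sum_congr rfl this, Finset.sum_ite_eq' (range L) 0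
            (fun l' => zhat n k y v l * zhat n k y v l'), if_pos (Finset.mem_range.2 (by omega)),
            if_pos hC]
        · have : ∀ l' ∈ range L, (if l = L - 1 ∧ j = 0 ∧ m = 2 * L - 2 ∧ l' = 0
              then zhat n k y v l * zhat n k y v l' else 0) = 0 := by
            intro l' _
            by_cases h1 : l' = 0
            · rw [if_neg (by tauto)]
            · rw [if_neg (by tauto)]
          rw [Finset.sum_congr rfl this, Finset.sum_const_zero, if_neg hC]
    rw [Finset.sum_congr rfl hinner, Finset.sum_add_distrib]
    congr 1
    · -- main diagonal part
      rw [← Finset.sum_filter]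
      have hfil : (range L).filter (fun l => l ≤ j) = range (j + 1) := by
        ext a
        simp only [Finset.mem_filter, Finset.mem_range]
        omega
      rw [hfil]
      refine Finset.sum_congr rfl fun l hl => ?_
      have hlj : l ≤ j := by
        have := Finset.mem_range.1 hl
        omega
      have h1 : zhat n k y v l = (v l : ℂ) := by
        rw [zhat, if_pos (by omega)]
      have h2 : zhat n k y v (l + (L - 1) - j) = ((y (l + k - 1 - j) : ℝ) : ℂ) := by
        rw [zhat, if_neg (by omega), if_pos (by omega)]
        congr 2
        omega
      rw [h1, h2]
    · by_cases hC : j = 0 ∧ m = 2 * L - 2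
      · have hstep : ∀ l ∈ range L,
            (if l = L - 1 ∧ j = 0 ∧ m = 2 * L - 2 then zhat n k y v l * zhat n k y v 0 else 0)
            = (if l = L - 1 then zhat n k y v l * zhat n k y v 0 else 0) := by
          intro l _
          by_cases h1 : l = L - 1
          · rw [if_pos ⟨h1, hC.1, hC.2⟩, if_pos h1]
          · rw [if_neg (by tauto), if_neg h1]
        rw [Finset.sum_congr rfl hstep, Finset.sum_ite_eq' (range L) (L - 1)
          (fun l => zhat n k y v l * zhat n k y v 0), if_pos (Finset.mem_range.2 (by omega)),
          if_pos hC]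
        have h1 : zhat n k y v (L - 1) = ((y (k - 1) : ℝ) : ℂ) := by
          rw [zhat, if_neg (by omega), if_pos (by omega)]
          congr 2
          omega
        have h2 : zhat n k y v 0 = (v 0 : ℂ) := by
          rw [zhat, if_pos (by omega)]
        rw [h1, h2]
      · have hstep : ∀ l ∈ range L,
            (if l = L - 1 ∧ j = 0 ∧ m = 2 * L - 2 then zhat n k y v l * zhat n k y v 0 else 0)
            = 0 := fun l _ => by rw [if_neg (by tauto)]
        rw [Finset.sum_congr rfl hstep, Finset.sum_const_zero, if_neg hC]
  -- final induction
  have hy' : ((y (k - 1) : ℝ) : ℂ) ≠ 0 := Complex.ofReal_ne_zero.2 hy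
  intro i
  induction i using Nat.strong_induction_on with
  | _ i IH =>
    intro hi
    have h := (key3 x i hi).symm.trans ((key2 i (by omega)).trans (key3 x' i hi))
    rw [Finset.sum_range_succ, Finset.sum_range_succ] at h
    have hsum : (∑ l ∈ range i, ((x l : ℂ) * ((y (l + k - 1 - i) : ℝ) : ℂ)))
        = ∑ l ∈ range i, ((x' l : ℂ) * ((y (l + k - 1 - i) : ℝ) : ℂ)) :=
      Finset.sum_congr rfl fun l hl => by
        have hli := Finset.mem_range.1 hl
        rw [IH l hli (by omega)]
    rw [hsum] at h
    have hidx : i + k - 1 - i = k - 1 := by omega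
    rw [hidx] at h
    by_cases hC : i = 0 ∧ m = 2 * L - 2
    · obtain ⟨hi0, hM⟩ := hC
      subst hi0
      rw [if_pos ⟨rfl, hM⟩, if_pos ⟨rfl, hM⟩] at h
      have h5 : ((x 0 : ℂ) - x' 0) * (2 * ((y (k - 1) : ℝ) : ℂ)) = 0 := by
        linear_combination h
      rcases mul_eq_zero.1 h5 with h6 | h6
      · exact_mod_cast sub_eq_zero.1 h6
      · exact absurd h6 (mul_ne_zero two_ne_zero hy')
    · rw [if_neg hC, if_neg hC] at h
      have h5 : ((x i : ℂ) - x' i) * ((y (k - 1) : ℝ) : ℂ) = 0 := by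
        linear_combination h
      rcases mul_eq_zero.1 h5 with h6 | h6
      · exact_mod_cast sub_eq_zero.1 h6
      · exact absurd h6 hy'
end

section
/- Let n, k, p be nonnegative integers with n ≥ 1, k ≥ 1, and set m = n + k + p. Fix y ∈ ℝ^k and for x ∈ ℝⁿ let ẑ(x) = (x_1,…,x_n, y_1,…,y_k, 0,…,0) ∈ ℝ^m. Then for every lag t with n ≤ t ≤ m − n, the map x ↦ r_t(ẑ(x)) is affine in x: there exist a vector h ∈ ℝⁿ and a constant c ∈ ℝ (both depending only on y, t, n, k, p) such that r_t(ẑ(x)) = ⟨h, x⟩ + c for all x ∈ ℝⁿ. (These lags contain no cross-multiplications of the unknown entries x_i, yielding the linear equations in the unknown signal.) -/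
/-- Circular autocorrelation at lag `t` of a real vector `z ∈ ℝ^m`
(entries indexed `0, …, m-1`): `r_t(z) = ∑_{l=0}^{m-1} z_{(l+t) mod m} · z_l`. -/
noncomputable def circAcorrR (m : ℕ) (z : ℕ → ℝ) (t : ℕ) : ℝ :=
  ∑ l ∈ Finset.range m, z ((l + t) % m) * z l

/-- The zero-padded combination `ẑ(x) = (x_0, …, x_{n-1}, y_0, …, y_{k-1}, 0, …, 0) ∈ ℝ^m`. -/
noncomputable def zhatR (n k : ℕ) (y x : ℕ → ℝ) (p : ℕ) : ℝ :=
  if p < n then x p else if p < n + k then y (p - n) else 0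

/-!
For `l < n` the partner index `l + t` lies in `[n, m)`, and for `l ≥ n` the entry `ẑ_l` is
known; so every product `ẑ_{(l+t) mod m} ẑ_l` has at most one factor that depends on `x`,
and the autocorrelation is a sum of affine functions of `x`.
-/

def affineFunctionals (R : Type*) [CommSemiring R] (n : ℕ) : Submodule R ((ℕ → R) → R) where
  carrier := {F | ∃ (h : ℕ → R) (c : R), ∀ x, F x = (∑ i ∈ Finset.range n, h i * x i) + c}
  zero_mem' := ⟨0, 0, fun x => by simp⟩
  add_mem' := by
    rintro F G ⟨h, c, hF⟩ ⟨h', c', hG⟩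
    refine ⟨h + h', c + c', fun x => ?_⟩
    simp only [Pi.add_apply, hF, hG, add_mul, Finset.sum_add_distrib]
    ring
  smul_mem' := by
    rintro a F ⟨h, c, hF⟩
    refine ⟨a • h, a * c, fun x => ?_⟩
    simp only [Pi.smul_apply, smul_eq_mul, hF, mul_add, Finset.mul_sum, mul_assoc]

namespace affineFunctionals

variable {R : Type*} [CommSemiring R] {n : ℕ}

theorem const_mem (c : R) : (fun _ => c) ∈ affineFunctionals R n :=
  ⟨0, c, fun x => by simp⟩

theorem coord_mem {i : ℕ} (hi : i < n) : (fun x => x i) ∈ affineFunctionals R n := by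
  refine ⟨fun j => if j = i then 1 else 0, 0, fun x => ?_⟩
  simp [Finset.mem_range.mpr hi]

end affineFunctionals

open affineFunctionals

theorem circAcorrR_mem_affineFunctionals {n m t : ℕ} (z : (ℕ → ℝ) → ℕ → ℝ)
    (hz : ∀ j, (fun x => z x j) ∈ affineFunctionals ℝ n)
    (hknown : ∀ j, n ≤ j → ∀ x, z x j = z 0 j) (ht : n ≤ t) (htm : t + n ≤ m) :
    (fun x => circAcorrR m (z x) t) ∈ affineFunctionals ℝ n := by
  simp only [circAcorrR, ← Finset.sum_fn]
  refine Submodule.sum_mem _ fun l _ => ?_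
  by_cases hl : l < n
  · have hshift : (l + t) % m = l + t := Nat.mod_eq_of_lt (by omega)
    convert Submodule.smul_mem _ (z 0 (l + t)) (hz l) using 1
    funext x
    rw [hshift, hknown _ (by omega), Pi.smul_apply, smul_eq_mul]
  · convert Submodule.smul_mem _ (z 0 l) (hz ((l + t) % m)) using 1
    funext x
    rw [hknown l (by omega), Pi.smul_apply, smul_eq_mul, mul_comm]

theorem zhatR_mem_affineFunctionals (n k : ℕ) (y : ℕ → ℝ) (j : ℕ) :
    (fun x => zhatR n k y x j) ∈ affineFunctionals ℝ n := by
  by_cases hj : j < n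
  · simpa only [zhatR, if_pos hj] using coord_mem hj
  · simpa only [zhatR, if_neg hj] using const_mem _

theorem zhatR_of_le {n k j : ℕ} (y x : ℕ → ℝ) (hj : n ≤ j) :
    zhatR n k y x j = zhatR n k y 0 j := by
  simp only [zhatR, if_neg (Nat.not_lt.mpr hj)]

theorem stmt4_general (n k p t : ℕ)
    (y : ℕ → ℝ) (ht1 : n ≤ t) (ht2 : t ≤ n + k + p - n) :
    ∃ (h : ℕ → ℝ) (c : ℝ), ∀ x : ℕ → ℝ,
      circAcorrR (n + k + p) (zhatR n k y x) t =
        (∑ i ∈ Finset.range n, h i * x i) + c :=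
  circAcorrR_mem_affineFunctionals (fun x => zhatR n k y x) (zhatR_mem_affineFunctionals n k y)
    (fun _ hj x => zhatR_of_le y x hj) ht1 (by omega)

/-- For `m = n + k + p` and every lag `t` with `n ≤ t ≤ m - n`, the circular autocorrelation
`x ↦ r_t(ẑ(x))` is affine in `x`: there exist `h ∈ ℝⁿ` and `c ∈ ℝ` (depending only on
`y, t, n, k, p`) with `r_t(ẑ(x)) = ⟨h, x⟩ + c` for every `x ∈ ℝⁿ`. -/
theorem stmt4 (n k p t : ℕ) (hn : 1 ≤ n) (hk : 1 ≤ k)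
    (y : ℕ → ℝ) (ht1 : n ≤ t) (ht2 : t ≤ n + k + p - n) :
    ∃ (h : ℕ → ℝ) (c : ℝ), ∀ x : ℕ → ℝ,
      circAcorrR (n + k + p) (zhatR n k y x) t =
        (∑ i ∈ Finset.range n, h i * x i) + c :=
  stmt4_general n k p t y ht1 ht2
end

section
/- Let n ≥ 1, p ≥ 0, and k ≥ max(3n−2−p, n) be integers, set L = k + p − n + 1, and assume L is odd; set r = (L+1)/2. For y ∈ ℝ^k define the r × n matrix M(y) by M(y)_{i,j} = (y_{i+j−1} if 1 ≤ i+j−1 ≤ k, else 0) + (y_{L−i+j} if 1 ≤ L−i+j ≤ k, else 0), for 1 ≤ i ≤ r, 1 ≤ j ≤ n. Then there exists y ∈ ℝ^k such that M(y) has full column rank n. -/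
/-!
Take `y = e_n`. Since `k ≥ 3n - 2 - p` gives `L ≥ 2n - 1`, we have `r ≥ n`. In row `n + 1 - j`
(1-based) the Hankel part of `M(e_n)` has its single `1` in column `j`, while the Toeplitz part
reaches `y_n` only in a column `c` with `L + c + j = 2n + 1`, which `L ≥ 2n - 1` allows only for
`c = j = 1`. So rows `n, n - 1, …, 1` form a diagonal `n × n` submatrix with diagonal entries
`≥ 1`, and `M(e_n)` has full column rank.
-/

/-- The folded coefficient matrix `M(y) = H₁ + Î H₂ ∈ ℝ^{r×n}` of the linear
autocorrelation equations: in 1-based indexing,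
`M(y)_{i,j} = (y_{i+j-1} if 1 ≤ i+j-1 ≤ k else 0) + (y_{L-i+j} if 1 ≤ L-i+j ≤ k else 0)`.
Here indices are 0-based, so `y` is indexed `0, …, k-1`, rows by `i < r`, columns by `j < n`. -/
noncomputable def Mmat (k n L r : ℕ) (y : ℕ → ℝ) : Matrix (Fin r) (Fin n) ℝ :=
  Matrix.of fun i j =>
    (if i.1 + j.1 + 1 ≤ k then y (i.1 + j.1) else 0) +
    (if i.1 < L + j.1 ∧ L + j.1 ≤ k + i.1 then y (L + j.1 - i.1 - 1) else 0)

open Matrix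

theorem Matrix.rank_eq_card_width_of_diagonal_rows {m n K : Type*} [Fintype n] [DecidableEq n]
    [Field K] (A : Matrix m n K) (f : n → m) (hoff : ∀ j c, c ≠ j → A (f j) c = 0)
    (hdiag : ∀ j, A (f j) j ≠ 0) : A.rank = Fintype.card n := by
  have hsub : A.submatrix f id = diagonal fun j => A (f j) j := by
    ext j c
    by_cases hcj : c = j
    · subst hcj; simp
    · simp [hoff j c hcj, diagonal_apply_ne _ (Ne.symm hcj)]
  have hunit : IsUnit (A.submatrix f id) := by
    rw [hsub, isUnit_diagonal, Pi.isUnit_iff]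
    exact fun j => (hdiag j).isUnit
  refine le_antisymm A.rank_le_card_width ?_
  rw [← rank_of_isUnit _ hunit]
  exact A.rank_submatrix_le f id

section StandardBasisBackground

variable {k n L r : ℕ}

theorem Mmat_single_apply_rev_of_ne (hL : 2 * n ≤ L + 1) (hr : n ≤ r) {j c : Fin n}
    (hcj : c ≠ j) : Mmat k n L r (Pi.single (n - 1) 1) (Fin.castLE hr j.rev) c = 0 := by
  have := j.isLt
  simp only [Mmat, of_apply, Fin.val_castLE, Fin.val_rev, Pi.single_apply]
  split_ifs <;> norm_num <;> omega

theorem one_le_Mmat_single_apply_rev (hk : n ≤ k) (hr : n ≤ r) (j : Fin n) :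
    1 ≤ Mmat k n L r (Pi.single (n - 1) 1) (Fin.castLE hr j.rev) j := by
  have := j.isLt
  simp only [Mmat, of_apply, Fin.val_castLE, Fin.val_rev, Pi.single_apply]
  split_ifs <;> norm_num <;> omega

end StandardBasisBackground

theorem stmt7_general (n p k : ℕ) (hk1 : 3 * n - 2 - p ≤ k) (hk2 : n ≤ k) :
    ∃ y : ℕ → ℝ,
      (Mmat k n (k + p - n + 1) ((k + p - n + 1 + 1) / 2) y).rank = n := by
  have hL : 2 * n ≤ k + p - n + 1 + 1 := by omega
  have hr : n ≤ (k + p - n + 1 + 1) / 2 := by omega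
  refine ⟨Pi.single (n - 1) 1, ?_⟩
  simpa using rank_eq_card_width_of_diagonal_rows _ (fun j => Fin.castLE hr j.rev)
    (fun _ _ hcj => Mmat_single_apply_rev_of_ne hL hr hcj)
    (fun j => (zero_lt_one.trans_le (one_le_Mmat_single_apply_rev hk2 hr j)).ne')

/-- For `n ≥ 1`, `p ≥ 0`, `k ≥ max(3n-2-p, n)`, `L = k+p-n+1` odd and `r = (L+1)/2`,
there exists a background `y ∈ ℝᵏ` for which `M(y)` has full column rank `n`. -/
theorem stmt7 (n p k : ℕ) (hn : 1 ≤ n) (hk1 : 3 * n - 2 - p ≤ k) (hk2 : n ≤ k)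
    (hodd : Odd (k + p - n + 1)) :
    ∃ y : ℕ → ℝ,
      (Mmat k n (k + p - n + 1) ((k + p - n + 1 + 1) / 2) y).rank = n :=
  stmt7_general n p k hk1 hk2
end

section
/- (Theorem 2.4.) Let n ≥ 1, p ≥ 0, and k ≥ max(3n−2−p, n) be integers, set L = k + p − n + 1, assume L is odd, and set r = (L+1)/2. For y ∈ ℝ^k define the r × n matrix M(y) by M(y)_{i,j} = (y_{i+j−1} if 1 ≤ i+j−1 ≤ k, else 0) + (y_{L−i+j} if 1 ≤ L−i+j ≤ k, else 0). Then the set {y ∈ ℝ^k : rank M(y) < n} has Lebesgue measure zero; equivalently, if the entries y_1,…,y_k are i.i.d. nondegenerate Gaussian random variables, then with probability 1 the matrix M(y) has full column rank n, so the reduced linear system M(y) x = v has at most one solution x ∈ ℝⁿ. -/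
/-!
`M(y)` depends linearly on `y`, so the determinant of any fixed `n × n` submatrix of `M(y)` is
a polynomial in `y`. The zero set of a nonzero real polynomial is Lebesgue-null (Fubini and
induction on the number of variables), and `rank M(y) < n` forces every such minor to vanish.
It therefore suffices to exhibit one `y` at which one minor is nonzero: for `y = e_{n-1}` the
first `n` rows of `M(y)`, taken in reverse order, form a diagonal matrix with positive entries.
-/

open MeasureTheory

namespace MvPolynomial

theorem eval_cons_eq_eval_eval_finSuccEquiv {R : Type*} [CommRing R] {k : ℕ} (a : R)
    (x : Fin k → R) (q : MvPolynomial (Fin (k + 1)) R) :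
    eval (Fin.cons a x) q = eval x (Polynomial.eval (C a) (finSuccEquiv R k q)) := by
  rw [eval_eq_eval_mv_eval', Polynomial.eval_map, ← Polynomial.eval₂_at_apply, eval_C]

theorem measurableSet_setOf_eval_eq_zero {σ : Type*} [Finite σ] (q : MvPolynomial σ ℝ) :
    MeasurableSet {x : σ → ℝ | eval x q = 0} :=
  (isClosed_eq (continuous_eval q) continuous_const).measurableSet

theorem volume_setOf_eval_eq_zero {k : ℕ} {q : MvPolynomial (Fin k) ℝ} (hq : q ≠ 0) :
    volume {x : Fin k → ℝ | eval x q = 0} = 0 := by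
  induction k with
  | zero =>
    obtain ⟨c, rfl⟩ := C_surjective (Fin 0) q
    have hc : c ≠ 0 := by rintro rfl; exact hq C_0
    simp [hc]
  | succ k ih =>
    set P := finSuccEquiv ℝ k q
    have hP : P ≠ 0 := (map_ne_zero_iff _ (finSuccEquiv ℝ k).injective).mpr hq
    set e := MeasurableEquiv.piFinSuccAbove (fun _ : Fin (k + 1) => ℝ) 0
    have hT := (measurableSet_setOf_eval_eq_zero q).preimage e.symm.measurable
    rw [← ((volume_preserving_piFinSuccAbove (fun _ => ℝ) 0).symm e).measure_preimage_equiv,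
      Measure.volume_eq_prod, Measure.measure_prod_null hT]
    have hroots : ∀ᵐ a : ℝ, Polynomial.eval (C a) P ≠ 0 := by
      refine measure_mono_null (fun a ha => ?_)
        (((Polynomial.finite_setOfPred_isRoot hP).preimage
          (C_injective (Fin k) ℝ).injOn).measure_zero volume)
      simpa using ha
    filter_upwards [hroots] with a ha
    have hslice : Prod.mk a ⁻¹' (e.symm ⁻¹' {x | eval x q = 0}) =
        {x | eval x (Polynomial.eval (C a) P) = 0} := by
      ext x
      have hcons : e.symm (a, x) = Fin.cons a x := by
        simp [e, MeasurableEquiv.piFinSuccAbove, Fin.consEquiv]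
      simp only [Set.mem_preimage, Set.mem_ofPred_eq, hcons,
        eval_cons_eq_eval_eval_finSuccEquiv, P]
    rw [hslice]
    exact ih ha

end MvPolynomial

namespace Matrix

variable {σ m n R : Type*}

theorem exists_map_eval_eq_of_linearMap [Fintype σ] [CommRing R]
    (Φ : (σ → R) →ₗ[R] Matrix m n R) :
    ∃ P : Matrix m n (MvPolynomial σ R), ∀ y, P.map (MvPolynomial.eval y) = Φ y := by
  classical
  refine ⟨of fun i j => ∑ l, MvPolynomial.C (Φ (Pi.single l 1) i j) * MvPolynomial.X l,
    fun y => ?_⟩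
  conv_rhs => rw [pi_eq_sum_univ' y, map_sum]
  ext i j
  simp [sum_apply, mul_comm]

theorem volume_setOf_rank_lt_eq_zero [Fintype n] [DecidableEq n] {k : ℕ}
    (Φ : (Fin k → ℝ) →ₗ[ℝ] Matrix m n ℝ) (f : n → m) {y₀ : Fin k → ℝ}
    (h₀ : ((Φ y₀).submatrix f id).det ≠ 0) :
    volume {y | (Φ y).rank < Fintype.card n} = 0 := by
  obtain ⟨P, hP⟩ := exists_map_eval_eq_of_linearMap Φ
  have heval (y : Fin k → ℝ) :
      MvPolynomial.eval y (P.submatrix f id).det = ((Φ y).submatrix f id).det := by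
    rw [RingHom.map_det, RingHom.mapMatrix_apply, ← submatrix_map, hP]
  refine measure_mono_null (fun y hy => ?_)
    (MvPolynomial.volume_setOf_eval_eq_zero (q := (P.submatrix f id).det)
      fun h => h₀ (by rw [← heval, h, map_zero]))
  rw [Set.mem_ofPred_eq, heval]
  by_contra hdet
  exact hy.not_ge (rank_of_det_ne_zero hdet ▸ rank_submatrix_le (Φ y) f id)

end Matrix

noncomputable def MmatLinearMap (k n L r : ℕ) : (Fin k → ℝ) →ₗ[ℝ] Matrix (Fin r) (Fin n) ℝ where
  toFun y := Mmat k n L r fun l => if h : l < k then y ⟨l, h⟩ else 0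
  map_add' a b := by
    ext i j
    simp only [Mmat, Matrix.of_apply, Matrix.add_apply, Pi.add_apply]
    split_ifs <;> ring
  map_smul' c a := by
    ext i j
    simp only [Mmat, Matrix.of_apply, Matrix.smul_apply, Pi.smul_apply, smul_eq_mul,
      RingHom.id_apply]
    split_ifs <;> ring

theorem MmatLinearMap_apply (k n L r : ℕ) (y : Fin k → ℝ) :
    MmatLinearMap k n L r y = Mmat k n L r fun l => if h : l < k then y ⟨l, h⟩ else 0 :=
  rfl

open Matrix in
theorem MmatLinearMap_submatrix_det_ne_zero {k n L r : ℕ} (hnk : n ≤ k) (hL : 2 * n - 1 ≤ L)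
    (hnr : n ≤ r) :
    ((MmatLinearMap k n L r fun i => if i.1 = n - 1 then 1 else 0).submatrix
      (Fin.castLE hnr ∘ Fin.rev) id).det ≠ 0 := by
  -- The Hankel part `y_{i+j}` hits `n - 1` exactly on the reversed diagonal; the Toeplitz
  -- part only at the corner `(0, 0)`, and only when `L = 2n - 1`.
  have hdiag : (MmatLinearMap k n L r fun i => if i.1 = n - 1 then 1 else 0).submatrix
      (Fin.castLE hnr ∘ Fin.rev) id =
        diagonal fun j => if j.1 = 0 ∧ L = 2 * n - 1 then 2 else 1 := by
    ext ⟨a, ha⟩ ⟨b, hb⟩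
    simp only [MmatLinearMap_apply, Mmat, submatrix_apply, of_apply, Function.comp_apply,
      Fin.val_castLE, Fin.val_rev, id_eq, diagonal_apply, Fin.mk.injEq]
    split_ifs <;> norm_num <;> omega
  rw [hdiag, det_diagonal]
  exact Finset.prod_ne_zero_iff.mpr fun j _ => by split_ifs <;> norm_num

theorem stmt8_general (n p k : ℕ) (hk1 : 3 * n - 2 - p ≤ k) (hk2 : n ≤ k) :
    volume {y : Fin k → ℝ |
      (Mmat k n (k + p - n + 1) ((k + p - n + 1 + 1) / 2)
        (fun l => if h : l < k then y ⟨l, h⟩ else 0)).rank < n} = 0 := by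
  have hnr : n ≤ (k + p - n + 1 + 1) / 2 := by omega
  simpa only [Fintype.card_fin, MmatLinearMap_apply] using
    Matrix.volume_setOf_rank_lt_eq_zero (MmatLinearMap _ _ _ _) _
      (MmatLinearMap_submatrix_det_ne_zero hk2 (by omega) hnr)

/-- Theorem 2.4: for `n ≥ 1`, `p ≥ 0`, `k ≥ max(3n-2-p, n)`, `L = k+p-n+1` odd and
`r = (L+1)/2`, the set of backgrounds `y ∈ ℝᵏ` for which `M(y)` fails to have full
column rank `n` has Lebesgue measure zero (so, for a.e. `y`, the reduced linear system
`M(y) x = v` has at most one solution). -/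
theorem stmt8 (n p k : ℕ) (hn : 1 ≤ n) (hk1 : 3 * n - 2 - p ≤ k) (hk2 : n ≤ k)
    (hodd : Odd (k + p - n + 1)) :
    volume {y : Fin k → ℝ |
      (Mmat k n (k + p - n + 1) ((k + p - n + 1 + 1) / 2)
        (fun l => if h : l < k then y ⟨l, h⟩ else 0)).rank < n} = 0 :=
  stmt8_general n p k hk1 hk2
end

section
/- (Theorem 2.3: uniqueness with probability 1 without oversampling to 2(n+k)−2.) Let n ≥ 1 and p ≥ 0 be integers, set m = n + k + p, and suppose k ≥ max(3n−2−p, n) if m−2n+1 is odd, and k ≥ max(3n−1−p, n) if m−2n+1 is even. Then for Lebesgue-almost every y ∈ ℝ^k (equivalently, with probability 1 when y_1,…,y_k are i.i.d. nondegenerate Gaussian), the following uniqueness holds: for all x, x' ∈ ℝⁿ, if |(F ẑ(x))_i| = |(F ẑ(x'))_i| for all i = 0,…,m−1, then x = x'. -/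
open MeasureTheory

open Finset

noncomputable def cE (m : ℕ) (t : ℤ) : ℂ :=
  Complex.exp (2 * (Real.pi : ℂ) * Complex.I * (t : ℂ) / (m : ℂ))

lemma cE_add (m : ℕ) (a b : ℤ) : cE m (a + b) = cE m a * cE m b := by
  rw [cE, cE, cE, ← Complex.exp_add]
  congr 1
  push_cast
  ring

lemma cE_conj (m : ℕ) (t : ℤ) : (starRingEnd ℂ) (cE m t) = cE m (-t) := by
  rw [cE, cE, ← Complex.exp_conj]
  congr 1
  simp only [map_div₀, map_mul, Complex.conj_I, map_ofNat, Complex.conj_ofReal,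
    map_intCast, map_natCast]
  push_cast
  ring

lemma cE_sum (m : ℕ) (hm : 0 < m) (t : ℤ) :
    ∑ i ∈ range m, cE m (t * i) = if (m : ℤ) ∣ t then (m : ℂ) else 0 := by
  have hmC : (m : ℂ) ≠ 0 := Nat.cast_ne_zero.mpr hm.ne'
  have hpow : ∀ i : ℕ, cE m (t * i) = (cE m t) ^ i := by
    intro i
    rw [cE, cE, ← Complex.exp_nat_mul]
    congr 1
    push_cast
    ring
  simp only [hpow]
  by_cases hdvd : (m : ℤ) ∣ t
  · obtain ⟨c, rfl⟩ := hdvd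
    have h1 : cE m (m * c) = 1 := by
      rw [cE]
      have : 2 * (Real.pi : ℂ) * Complex.I * ((m : ℤ) * c : ℤ) / (m : ℂ)
          = (c : ℤ) * (2 * (Real.pi : ℂ) * Complex.I) := by
        push_cast
        field_simp
      rw [this, Complex.exp_int_mul_two_pi_mul_I]
    rw [if_pos ⟨c, rfl⟩]
    simp [h1]
  · have hne : cE m t ≠ 1 := by
      intro h
      rw [cE, Complex.exp_eq_one_iff] at h
      obtain ⟨c, hc⟩ := h
      apply hdvd
      refine ⟨c, ?_⟩
      have h2pi : (2 : ℂ) * (Real.pi : ℂ) * Complex.I ≠ 0 := by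
        simp [Real.pi_ne_zero, Complex.I_ne_zero, Complex.ofReal_ne_zero]
      field_simp at hc
      have h4 : ((2:ℂ) * (Real.pi : ℂ) * Complex.I) * (t : ℂ)
          = ((2:ℂ) * (Real.pi : ℂ) * Complex.I) * ((m : ℂ) * (c : ℂ)) := by
        linear_combination (2 * (Real.pi : ℂ) * Complex.I) * hc
      have h5 : (t : ℂ) = (m : ℂ) * (c : ℂ) := mul_left_cancel₀ h2pi h4
      exact_mod_cast h5
    rw [if_neg hdvd, geom_sum_eq hne]
    have hm1 : (cE m t) ^ m = 1 := by
      rw [← hpow m, cE]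
      have : 2 * (Real.pi : ℂ) * Complex.I * ((t * (m:ℕ) : ℤ) : ℂ) / (m : ℂ)
          = (t : ℂ) * (2 * (Real.pi : ℂ) * Complex.I) := by
        push_cast
        field_simp
      rw [this, Complex.exp_int_mul_two_pi_mul_I]
    rw [hm1]
    simp

lemma dft_eq_cE (m : ℕ) (w : ℕ → ℂ) (i : ℕ) :
    dft m w i = ∑ l ∈ range m, w l * cE m (-((i : ℤ) * l)) := by
  unfold dft cE
  refine Finset.sum_congr rfl fun l _ => ?_
  congr 1
  congr 1
  push_cast
  ring

lemma dft_autocorr (m : ℕ) (hm : 0 < m) (w : ℕ → ℂ) (r : ℕ) (hr : r < m) :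
    ∑ i ∈ range m, (dft m w i * (starRingEnd ℂ) (dft m w i)) * cE m ((r : ℤ) * i)
    = (m : ℂ) * ∑ l ∈ range m, w l * (starRingEnd ℂ) (w ((l + (m - r)) % m)) := by
  have expand : ∀ i ∈ range m,
      (dft m w i * (starRingEnd ℂ) (dft m w i)) * cE m ((r : ℤ) * i)
      = ∑ l ∈ range m, ∑ l' ∈ range m,
          (w l * (starRingEnd ℂ) (w l')) * cE m (((l' : ℤ) - l + r) * i) := by
    intro i _
    rw [dft_eq_cE, map_sum, Finset.sum_mul_sum, Finset.sum_mul]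
    refine Finset.sum_congr rfl fun l _ => ?_
    rw [Finset.sum_mul]
    refine Finset.sum_congr rfl fun l' _ => ?_
    rw [map_mul, cE_conj, neg_neg]
    rw [show (((l' : ℤ) - l + r) * i) = (-((i:ℤ) * l) + ((i:ℤ) * l' + (r:ℤ) * i)) by ring,
      cE_add, cE_add]
    ring
  rw [Finset.sum_congr rfl expand]
  rw [Finset.sum_comm]
  have inner : ∀ l ∈ range m,
      ∑ i ∈ range m, ∑ l' ∈ range m,
          (w l * (starRingEnd ℂ) (w l')) * cE m (((l' : ℤ) - l + r) * i)
      = (w l * (starRingEnd ℂ) (w ((l + (m - r)) % m))) * m := by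
    intro l hl
    rw [Finset.sum_comm]
    set l0 := (l + (m - r)) % m with hl0def
    have hl0m : l0 < m := Nat.mod_lt _ hm
    set q := (l + (m - r)) / m with hqdef
    have hdm : m * q + l0 = l + (m - r) := Nat.div_add_mod _ m
    have hdmz : (m : ℤ) * (q : ℤ) + (l0 : ℤ) = l + (m : ℤ) - r := by
      have h := congrArg (fun t : ℕ => (t : ℤ)) hdm
      push_cast [Nat.cast_sub hr.le] at h
      linarith
    have hdvd0 : (m : ℤ) ∣ ((l0 : ℤ) - l + r) := by
      refine ⟨1 - (q : ℤ), ?_⟩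
      linear_combination hdmz
    have step : ∀ l' ∈ range m,
        ∑ i ∈ range m, (w l * (starRingEnd ℂ) (w l')) * cE m (((l' : ℤ) - l + r) * i)
        = (w l * (starRingEnd ℂ) (w l')) *
            (if (m : ℤ) ∣ ((l' : ℤ) - l + r) then (m : ℂ) else 0) := by
      intro l' _
      rw [← Finset.mul_sum, cE_sum m hm]
    rw [Finset.sum_congr rfl step]
    rw [Finset.sum_eq_single_of_mem l0 (Finset.mem_range.mpr hl0m)]
    · rw [if_pos hdvd0]
    · intro b hb hne
      rw [if_neg, mul_zero]
      intro hbdvd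
      apply hne
      have hdiff : (m : ℤ) ∣ ((b : ℤ) - l0) := by
        have h2 := dvd_sub hbdvd hdvd0
        have h3 : ((b : ℤ) - l + r) - ((l0 : ℤ) - l + r) = (b : ℤ) - l0 := by ring
        rwa [h3] at h2
      have hb' : (b : ℕ) < m := Finset.mem_range.mp hb
      have : (b : ℤ) - l0 = 0 := by
        apply Int.eq_zero_of_dvd_of_natAbs_lt_natAbs hdiff
        omega
      omega
  rw [Finset.sum_congr rfl inner, ← Finset.sum_mul]
  ring

/-- background extension -/
noncomputable def Wf (n k : ℕ) (Y : ℕ → ℝ) (t : ℕ) : ℝ :=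
  if n ≤ t ∧ t < n + k then Y (t - n) else 0

/-- real zero-padded signal -/
noncomputable def zr (n k : ℕ) (Y x : ℕ → ℝ) (l : ℕ) : ℝ :=
  if l < n then x l else Wf n k Y l

lemma acf_diff (n k p : ℕ) (hn : 1 ≤ n) (hk : n ≤ k) (hA : 3*n ≤ k+p+2)
    (Y x x' : ℕ → ℝ) (s : ℕ) (hs1 : n ≤ s) (hs2 : s < 2*n) :
    ∑ l ∈ Finset.range (n+k+p), (zr n k Y x l * zr n k Y x ((l+s) % (n+k+p))
      - zr n k Y x' l * zr n k Y x' ((l+s) % (n+k+p)))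
    = ∑ j ∈ Finset.range n, (x j - x' j) *
        (Wf n k Y (j+s) + Wf n k Y ((n+k+p)-s+j)) := by
  set m := n+k+p with hmdef
  have hm4 : 4*n ≤ m+2 := by omega
  have hsm : s < m := by omega
  have key : ∀ l ∈ range m,
      (zr n k Y x l * zr n k Y x ((l+s) % m) - zr n k Y x' l * zr n k Y x' ((l+s) % m))
      = (if l < n then (x l - x' l) * Wf n k Y (l+s) else 0)
      + (if m - s ≤ l ∧ l < m - s + n then Wf n k Y l * (x (l+s-m) - x' (l+s-m)) else 0) := by
    intro l hl
    rw [Finset.mem_range] at hl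
    by_cases hln : l < n
    · have h1 : l + s < m := by omega
      have h2 : ¬ (l + s < n) := by omega
      rw [Nat.mod_eq_of_lt h1]
      rw [if_pos hln, if_neg (by omega : ¬ (m - s ≤ l ∧ l < m - s + n))]
      simp only [zr, if_pos hln, if_neg h2]
      ring
    · by_cases hlm : l + s < m
      · rw [Nat.mod_eq_of_lt hlm]
        have h2 : ¬ (l + s < n) := by omega
        rw [if_neg hln, if_neg (by omega : ¬ (m - s ≤ l ∧ l < m - s + n))]
        simp only [zr, if_neg hln, if_neg h2]
        ring
      · have hmod : (l + s) % m = l + s - m := by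
          rw [Nat.mod_eq_sub_mod (by omega), Nat.mod_eq_of_lt (by omega)]
        rw [hmod]
        by_cases htn : l + s - m < n
        · rw [if_neg hln, if_pos (by omega : m - s ≤ l ∧ l < m - s + n)]
          simp only [zr, if_neg hln, if_pos htn]
          ring
        · rw [if_neg hln, if_neg (by omega : ¬ (m - s ≤ l ∧ l < m - s + n))]
          simp only [zr, if_neg hln, if_neg htn]
          ring
  rw [Finset.sum_congr rfl key, Finset.sum_add_distrib]
  have e1 : ∑ l ∈ range m, (if l < n then (x l - x' l) * Wf n k Y (l+s) else 0)
      = ∑ j ∈ range n, (x j - x' j) * Wf n k Y (j+s) := by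
    rw [← Finset.sum_subset (Finset.range_subset_range.mpr (by omega : n ≤ m))]
    · exact Finset.sum_congr rfl fun j hj => if_pos (Finset.mem_range.mp hj)
    · intro l _ hln
      rw [Finset.mem_range] at hln
      exact if_neg (by omega)
  have e2 : ∑ l ∈ range m, (if m - s ≤ l ∧ l < m - s + n then
        Wf n k Y l * (x (l+s-m) - x' (l+s-m)) else 0)
      = ∑ j ∈ range n, Wf n k Y (m-s+j) * (x j - x' j) := by
    rw [← Finset.sum_subset (fun l hl => Finset.mem_range.mpr
        (by have := Finset.mem_Ico.mp hl; omega) : Finset.Ico (m-s) (m-s+n) ⊆ range m)]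
    · rw [Finset.sum_Ico_eq_sum_range, Nat.add_sub_cancel_left]
      refine Finset.sum_congr rfl fun j hj => ?_
      rw [Finset.mem_range] at hj
      rw [if_pos (by omega : m - s ≤ m - s + j ∧ m - s + j < m - s + n)]
      have hidx : m - s + j + s - m = j := by omega
      rw [hidx]
    · intro l _ hln
      rw [Finset.mem_Ico] at hln
      exact if_neg (by omega)
  rw [e1, e2, ← Finset.sum_add_distrib]
  exact Finset.sum_congr rfl fun j _ => by ring

/-- polynomial coefficient matrix -/
noncomputable def Qm (n k p : ℕ) : Matrix (Fin n) (Fin n) (MvPolynomial (Fin k) ℝ) :=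
  Matrix.of fun i j =>
    (if h : (i:ℕ)+(j:ℕ) < k then MvPolynomial.X ⟨(i:ℕ)+(j:ℕ), h⟩ else 0) +
    (if h : p < n+(i:ℕ)-(j:ℕ) ∧ n+(i:ℕ)-(j:ℕ) ≤ p+k then
      MvPolynomial.X ⟨k+p+(j:ℕ)-(n+(i:ℕ)), by omega⟩ else 0)

lemma Qm_eval_eq_W (n k p : ℕ) (hk : n ≤ k) (hA : 3*n ≤ k+p+2)
    (y : Fin k → ℝ) (Y : ℕ → ℝ) (hY : ∀ l (h : l < k), Y l = y ⟨l, h⟩)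
    (i j : Fin n) :
    MvPolynomial.eval y (Qm n k p i j)
      = Wf n k Y ((j:ℕ)+(n+(i:ℕ))) + Wf n k Y ((n+k+p)-(n+(i:ℕ))+(j:ℕ)) := by
  have hi := i.isLt
  have hj := j.isLt
  rw [Qm]
  simp only [Matrix.of_apply, map_add]
  congr 1
  · rw [Wf]
    split_ifs with h1 h2 h2
    · rw [MvPolynomial.eval_X, hY _ (by omega)]
      congr 1
      simp only [Fin.mk.injEq]
      omega
    · exfalso; omega
    · exfalso; omega
    · simp
  · rw [Wf]
    split_ifs with h1 h2 h2
    · rw [MvPolynomial.eval_X, hY _ (by omega)]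
      congr 1
      simp only [Fin.mk.injEq]
      omega
    · exfalso; omega
    · exfalso; omega
    · simp

lemma Qm_det_ne_zero (n k p : ℕ) (hn : 1 ≤ n) (hk : n ≤ k) (hA : 3*n ≤ k+p+2) :
    (Qm n k p).det ≠ 0 := by
  intro h0
  set yd : Fin k → ℝ := fun t => if (t:ℕ) + 1 = n then 1 else 0 with hyd
  have h1 : MvPolynomial.eval yd (Qm n k p).det = 0 := by rw [h0]; simp
  rw [RingHom.map_det, RingHom.mapMatrix_apply] at h1
  set dv : Fin n → ℝ := fun j => if (j:ℕ) = 0 ∧ k+p+2 = 3*n then 2 else 1 with hdv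
  have hA' : (Qm n k p).map (MvPolynomial.eval yd)
      = (Matrix.diagonal (fun i => dv (Fin.rev i))).submatrix id Fin.rev := by
    funext i j
    have hi := i.isLt
    have hj := j.isLt
    simp only [Matrix.map_apply, Matrix.submatrix_apply, id_eq, Qm, Matrix.of_apply, map_add]
    rw [Matrix.diagonal_apply]
    by_cases hij : i = Fin.rev j
    · rw [if_pos hij]
      have hrev : (i:ℕ) + (j:ℕ) + 1 = n := by
        have := congrArg Fin.val hij
        rw [Fin.val_rev] at this
        omega
      have hdvj : dv (Fin.rev i) = dv j := by rw [hij, Fin.rev_rev]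
      rw [hdvj]
      -- first dite: condition i+j < k true since i+j = n-1 < k
      rw [dif_pos (by omega : (i:ℕ)+(j:ℕ) < k)]
      by_cases hc : p < n+(i:ℕ)-(j:ℕ) ∧ n+(i:ℕ)-(j:ℕ) ≤ p+k
      · rw [dif_pos hc]
        simp only [map_add, MvPolynomial.eval_X, hyd, hdv]
        by_cases hcc : k+p+(j:ℕ)-(n+(i:ℕ)) + 1 = n
        · -- second term contributes 1; this forces j = 0, k+p+2 = 3n
          rw [if_pos (by omega : (i:ℕ)+(j:ℕ)+1 = n), if_pos hcc,
            if_pos (by omega : (j:ℕ) = 0 ∧ k+p+2 = 3*n)]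
          norm_num
        · rw [if_pos (by omega : (i:ℕ)+(j:ℕ)+1 = n), if_neg hcc,
            if_neg (by omega : ¬((j:ℕ) = 0 ∧ k+p+2 = 3*n))]
          norm_num
      · rw [dif_neg hc]
        simp only [map_add, MvPolynomial.eval_X, hyd, hdv]
        rw [if_pos (by omega : (i:ℕ)+(j:ℕ)+1 = n),
          if_neg (by omega : ¬((j:ℕ) = 0 ∧ k+p+2 = 3*n))]
        norm_num
    · rw [if_neg hij]
      have hrev : ¬ ((i:ℕ) + (j:ℕ) + 1 = n) := by
        intro hc
        apply hij
        apply Fin.ext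
        rw [Fin.val_rev]
        omega
      -- both terms evaluate to 0 at yd
      by_cases h1' : (i:ℕ)+(j:ℕ) < k
      · rw [dif_pos h1']
        by_cases hc : p < n+(i:ℕ)-(j:ℕ) ∧ n+(i:ℕ)-(j:ℕ) ≤ p+k
        · rw [dif_pos hc]
          simp only [MvPolynomial.eval_X, hyd]
          rw [if_neg (by omega : ¬((i:ℕ)+(j:ℕ)+1 = n)),
            if_neg (by omega : ¬(k+p+(j:ℕ)-(n+(i:ℕ)) + 1 = n))]
          norm_num
        · rw [dif_neg hc]
          simp only [MvPolynomial.eval_X, hyd]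
          rw [if_neg (by omega : ¬((i:ℕ)+(j:ℕ)+1 = n))]
          norm_num
      · rw [dif_neg h1']
        by_cases hc : p < n+(i:ℕ)-(j:ℕ) ∧ n+(i:ℕ)-(j:ℕ) ≤ p+k
        · rw [dif_pos hc]
          simp only [MvPolynomial.eval_X, hyd]
          rw [if_neg (by omega : ¬(k+p+(j:ℕ)-(n+(i:ℕ)) + 1 = n))]
          norm_num
        · rw [dif_neg hc]
          norm_num
  rw [hA'] at h1
  have : ((Matrix.diagonal (fun i => dv (Fin.rev i))).submatrix id Fin.rev).det ≠ 0 := by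
    rw [show (Fin.rev : Fin n → Fin n) = ⇑(Fin.revPerm) from rfl, Matrix.det_permute',
      Matrix.det_diagonal]
    apply mul_ne_zero
    · simp only [ne_eq, Int.cast_eq_zero]
      exact_mod_cast Units.ne_zero (Equiv.Perm.sign Fin.revPerm)
    · apply Finset.prod_ne_zero_iff.mpr
      intro i _
      simp only [hdv]
      split_ifs <;> norm_num
  exact this h1

lemma measurable_mveval {k : ℕ} (q : MvPolynomial (Fin k) ℝ) :
    Measurable (fun y : Fin k → ℝ => MvPolynomial.eval y q) := by
  induction q using MvPolynomial.induction_on with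
  | C a => simpa using measurable_const
  | add p q hp hq => simp only [map_add]; exact hp.add hq
  | mul_X p i hp => simp only [map_mul, MvPolynomial.eval_X]; exact hp.mul (measurable_pi_apply i)

lemma mvpoly_ae_ne_zero' {k : ℕ} (q : MvPolynomial (Fin (k+1)) ℝ)
    (T : Set ((Fin k → ℝ) × ℝ))
    (hT : T = {z | MvPolynomial.eval (Fin.cons z.2 z.1 : Fin (k+1) → ℝ) q = 0})
    (hTmeas : MeasurableSet T)
    (hTnull : (volume : Measure ((Fin k → ℝ) × ℝ)) T = 0) :
    ∀ᵐ y : Fin (k+1) → ℝ ∂volume, MvPolynomial.eval y q ≠ 0 := by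
  rw [ae_iff]
  set e := MeasurableEquiv.piFinSuccAbove (fun _ : Fin (k+1) => ℝ) 0 with he
  have mp : MeasurePreserving (fun y => Prod.swap (e y)) volume
      (volume : Measure ((Fin k → ℝ) × ℝ)) := by
    have h1 := volume_preserving_piFinSuccAbove (fun _ : Fin (k+1) => ℝ) 0
    have h2 : MeasurePreserving (Prod.swap)
        (volume : Measure (ℝ × (Fin k → ℝ))) (volume : Measure ((Fin k → ℝ) × ℝ)) := by
      rw [Measure.volume_eq_prod, Measure.volume_eq_prod]
      exact Measure.measurePreserving_swap
    exact h2.comp h1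
  have hset : {y : Fin (k+1) → ℝ | ¬ MvPolynomial.eval y q ≠ 0}
      = (fun y => Prod.swap (e y)) ⁻¹' T := by
    ext y
    simp only [Set.mem_setOf_eq, not_not, Set.mem_preimage, hT]
    have hy : (Fin.cons ((Prod.swap (e y)).2) ((Prod.swap (e y)).1) : Fin (k+1) → ℝ) = y := by
      funext i
      refine Fin.cases ?_ ?_ i
      · simp [he, MeasurableEquiv.piFinSuccAbove]
      · intro j
        simp [he, MeasurableEquiv.piFinSuccAbove, Fin.zero_succAbove, Fin.tail]
    rw [hy]
  rw [hset, mp.measure_preimage hTmeas.nullMeasurableSet, hTnull]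

lemma mvpoly_ae_ne_zero : ∀ {k : ℕ} (q : MvPolynomial (Fin k) ℝ), q ≠ 0 →
    ∀ᵐ y : Fin k → ℝ ∂volume, MvPolynomial.eval y q ≠ 0 := by
  intro k
  induction k with
  | zero =>
    intro q hq
    obtain ⟨c, rfl⟩ := MvPolynomial.C_surjective (Fin 0) q
    filter_upwards with y
    simpa using fun h => hq (by simp [h])
  | succ k ih =>
    intro q hq
    set P := MvPolynomial.finSuccEquiv ℝ k q with hP
    have hPne : P ≠ 0 := by
      simp only [hP, ne_eq, EmbeddingLike.map_eq_zero_iff]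
      exact hq
    have hlc : P.leadingCoeff ≠ 0 := Polynomial.leadingCoeff_ne_zero.mpr hPne
    -- the set of bad (tail, head) pairs
    set T : Set ((Fin k → ℝ) × ℝ) :=
      {z | MvPolynomial.eval (Fin.cons z.2 z.1 : Fin (k+1) → ℝ) q = 0} with hT
    have hTmeas : MeasurableSet T := by
      have : Measurable (fun z : (Fin k → ℝ) × ℝ =>
          MvPolynomial.eval (Fin.cons z.2 z.1 : Fin (k+1) → ℝ) q) := by
        apply (measurable_mveval q).comp
        apply measurable_pi_lambda
        intro i
        refine Fin.cases ?_ ?_ i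
        · simpa using measurable_snd
        · intro j; simp only [Fin.cons_succ]; exact (measurable_pi_apply j).comp measurable_fst
      exact this (measurableSet_singleton 0)
    have hTnull : (volume : Measure ((Fin k → ℝ) × ℝ)) T = 0 := by
      rw [Measure.volume_eq_prod, Measure.measure_prod_null hTmeas]
      filter_upwards [ih P.leadingCoeff hlc] with s hs
      have hmapne : P.map (MvPolynomial.eval s) ≠ 0 := by
        intro h
        apply hs
        have h2 := Polynomial.coeff_map (f := MvPolynomial.eval s) (p := P) P.natDegree
        rw [h, Polynomial.coeff_zero] at h2
        rw [Polynomial.leadingCoeff] at *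
        exact h2.symm
      have hfin : Set.Finite {a : ℝ | (Prod.mk s a) ∈ T} := by
        have : {a : ℝ | (Prod.mk s a) ∈ T} ⊆
            {a : ℝ | (P.map (MvPolynomial.eval s)).IsRoot a} := by
          intro a ha
          simp only [hT, Set.mem_setOf_eq] at ha
          rw [MvPolynomial.eval_eq_eval_mv_eval'] at ha
          exact ha
        exact (Polynomial.finite_setOf_isRoot hmapne).subset this
      exact hfin.measure_zero _
    exact mvpoly_ae_ne_zero' q T hT hTmeas hTnull


/-- Theorem 2.3: with `m = n + k + p` and `k ≥ max(3n-2-p, n)` when `m - 2n + 1` is odd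
(resp. `k ≥ max(3n-1-p, n)` when it is even), for Lebesgue-almost every background
`y ∈ ℝᵏ` the phase retrieval problem has a unique solution: equal Fourier magnitudes of
the zero-padded combinations force `x = x'`. -/
theorem stmt9 (n k p : ℕ) (hn : 1 ≤ n) (hk : n ≤ k)
    (hodd : Odd (n + k + p - 2 * n + 1) → 3 * n - 2 - p ≤ k)
    (heven : ¬ Odd (n + k + p - 2 * n + 1) → 3 * n - 1 - p ≤ k) :
    ∀ᵐ y : Fin k → ℝ ∂volume,
      ∀ x x' : ℕ → ℝ,
        (∀ i < n + k + p,
          ‖dft (n + k + p)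
              (zhat n k (fun l => if h : l < k then y ⟨l, h⟩ else 0) x) i‖ =
          ‖dft (n + k + p)
              (zhat n k (fun l => if h : l < k then y ⟨l, h⟩ else 0) x') i‖) →
        ∀ i < n, x i = x' i := by
  have hA : 3*n ≤ k+p+2 := by
    by_cases h : Odd (n + k + p - 2 * n + 1)
    · have := hodd h; omega
    · have := heven h; omega
  have hQ := Qm_det_ne_zero n k p hn hk hA
  filter_upwards [mvpoly_ae_ne_zero (Qm n k p).det hQ] with y hy
  intro x x' hmag i0 hi0
  have hm : 0 < n + k + p := by omega
  set Y : ℕ → ℝ := fun l => if h : l < k then y ⟨l, h⟩ else 0 with hYdef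
  have hYl : ∀ (l : ℕ) (h : l < k), Y l = y ⟨l, h⟩ := by
    intro l h
    rw [hYdef]
    exact dif_pos h
  have hzr : ∀ (xx : ℕ → ℝ) (l : ℕ), zhat n k Y xx l = ((zr n k Y xx l : ℝ) : ℂ) := by
    intro xx l
    rw [zhat, zr, Wf]
    split_ifs <;> first | rfl | (exfalso; omega)
  -- autocorrelation equality for the clean shifts
  have hacf : ∀ s : ℕ, n ≤ s → s < 2*n →
      ∑ l ∈ Finset.range (n+k+p), zr n k Y x l * zr n k Y x ((l+s) % (n+k+p))
      = ∑ l ∈ Finset.range (n+k+p), zr n k Y x' l * zr n k Y x' ((l+s) % (n+k+p)) := by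
    intro s hs1 hs2
    have hr : n + k + p - s < n + k + p := by omega
    have h1 := dft_autocorr (n+k+p) hm (zhat n k Y x) (n+k+p-s) hr
    have h2 := dft_autocorr (n+k+p) hm (zhat n k Y x') (n+k+p-s) hr
    have hms : n + k + p - (n + k + p - s) = s := by omega
    rw [hms] at h1 h2
    have hprod : ∀ i ∈ Finset.range (n+k+p),
        dft (n+k+p) (zhat n k Y x) i * (starRingEnd ℂ) (dft (n+k+p) (zhat n k Y x) i)
        = dft (n+k+p) (zhat n k Y x') i *
            (starRingEnd ℂ) (dft (n+k+p) (zhat n k Y x') i) := by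
      intro i hi
      have hneq := hmag i (Finset.mem_range.mp hi)
      have hnsq : Complex.normSq (dft (n+k+p) (zhat n k Y x) i)
          = Complex.normSq (dft (n+k+p) (zhat n k Y x') i) := by
        rw [← Complex.sq_norm, ← Complex.sq_norm, hneq]
      rw [Complex.mul_conj, Complex.mul_conj, hnsq]
    have heq : ∑ i ∈ Finset.range (n+k+p),
          (dft (n+k+p) (zhat n k Y x) i * (starRingEnd ℂ) (dft (n+k+p) (zhat n k Y x) i))
            * cE (n+k+p) (((n+k+p-s : ℕ) : ℤ) * i)
        = ∑ i ∈ Finset.range (n+k+p),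
          (dft (n+k+p) (zhat n k Y x') i * (starRingEnd ℂ) (dft (n+k+p) (zhat n k Y x') i))
            * cE (n+k+p) (((n+k+p-s : ℕ) : ℤ) * i) :=
      Finset.sum_congr rfl fun i hi => by rw [hprod i hi]
    have h3 := h1.symm.trans (heq.trans h2)
    have h4 := mul_left_cancel₀ (show ((n+k+p : ℕ) : ℂ) ≠ 0 from
      Nat.cast_ne_zero.mpr hm.ne') h3
    have conv : ∀ xx : ℕ → ℝ,
        ∑ l ∈ Finset.range (n+k+p), zhat n k Y xx l *
          (starRingEnd ℂ) (zhat n k Y xx ((l + s) % (n+k+p)))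
        = ((∑ l ∈ Finset.range (n+k+p),
            zr n k Y xx l * zr n k Y xx ((l+s) % (n+k+p)) : ℝ) : ℂ) := by
      intro xx
      rw [Complex.ofReal_sum]
      refine Finset.sum_congr rfl fun l _ => ?_
      rw [hzr, hzr, Complex.conj_ofReal, Complex.ofReal_mul]
    rw [conv, conv] at h4
    exact_mod_cast h4
  -- the linear system
  set u : Fin n → ℝ := fun j => x (j : ℕ) - x' (j : ℕ) with hu
  have hMu : Matrix.mulVec ((Qm n k p).map (MvPolynomial.eval y)) u = 0 := by
    funext i
    have hilt := i.isLt
    have hs := hacf (n + (i : ℕ)) (by omega) (by omega)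
    have hdiff := acf_diff n k p hn hk hA Y x x' (n + (i : ℕ)) (by omega) (by omega)
    rw [Finset.sum_sub_distrib, hs, sub_self] at hdiff
    show ∑ j, ((Qm n k p).map (MvPolynomial.eval y)) i j * u j = 0
    rw [← hdiff.symm]
    rw [← Fin.sum_univ_eq_sum_range (fun j => (x j - x' j) *
      (Wf n k Y (j + (n + (i : ℕ))) + Wf n k Y (n + k + p - (n + (i : ℕ)) + j))) n]
    refine Finset.sum_congr rfl fun j _ => ?_
    rw [Matrix.map_apply, Qm_eval_eq_W n k p hk hA y Y hYl i j]
    simp only [hu]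
    ring
  have hdetne : ((Qm n k p).map (MvPolynomial.eval y)).det ≠ 0 := by
    rw [← RingHom.mapMatrix_apply, ← RingHom.map_det]
    exact hy
  have hunit : IsUnit ((Qm n k p).map (MvPolynomial.eval y)) :=
    (Matrix.isUnit_iff_isUnit_det _).mpr (isUnit_iff_ne_zero.mpr hdetne)
  have hinj := Matrix.mulVec_injective_iff_isUnit.mpr hunit
  have hu0 : u = 0 := hinj (by rw [hMu, Matrix.mulVec_zero])
  have hfin := congrFun hu0 ⟨i0, hi0⟩
  simp only [hu, Pi.zero_apply] at hfin
  linarith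
end

section
/- Let m ≥ 1, let b ∈ ℝ^m have nonnegative entries, let u ∈ ℂ^m, and let ũ be the phase-matched synthesis of u with magnitudes b. Then the amplitude loss satisfies f(u) := (1/(2m)) Σ_{i=0}^{m−1} (|(F u)_i| − b_i)² = (1/2) Σ_{l=0}^{m−1} |u_l − ũ_l|². In particular the (generalized) gradient step u − ũ satisfies f(u) = (1/2)‖u − ũ‖². -/
/-- The phase function: `sgn(w) = w / |w|` for `w ≠ 0` and `sgn(0) = 1`. -/
noncomputable def csgn (w : ℂ) : ℂ :=
  if w = 0 then 1 else w / (‖w‖ : ℂ)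

/-- The phase-matched synthesis of `u ∈ ℂ^m` with target magnitudes `b`:
`ũ_l = (1/m) ∑_{i=0}^{m-1} exp(2πι i l / m) · b_i · sgn((F u)_i)`. -/
noncomputable def utilde (m : ℕ) (b : ℕ → ℝ) (u : ℕ → ℂ) (l : ℕ) : ℂ :=
  ((m : ℂ))⁻¹ * ∑ i ∈ Finset.range m,
    Complex.exp ((2 : ℂ) * (Real.pi : ℂ) * Complex.I * (i : ℂ) * (l : ℂ) / (m : ℂ)) *
      (b i : ℂ) * csgn (dft m u i)

/-! The residual `u - ũ` is the inverse DFT of `W_i = (F u)_i - b_i sgn((F u)_i)`, because `u` is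
the inverse DFT of `F u`. Parseval turns `∑ |u_l - ũ_l|²` into `(1/m) ∑ |W_i|²`, and
`|z - b sgn z| = ||z| - b|` for every real `b`, since `z` and `b sgn z` lie on one line through `0`. -/

open Complex Finset
open scoped Real ComplexConjugate

lemma sum_range_exp_int_mul_div {m : ℕ} (hm : m ≠ 0) (z : ℤ) :
    ∑ l ∈ range m, exp (2 * π * I * z * l / m) = if (m : ℤ) ∣ z then (m : ℂ) else 0 := by
  have hζ := isPrimitiveRoot_exp m hm
  set ζ := exp (2 * π * I / m)
  have hpow : ∀ l : ℕ, exp (2 * π * I * z * l / m) = (ζ ^ z) ^ l := by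
    intro l
    rw [← exp_int_mul, ← exp_nat_mul]
    ring_nf
  simp only [hpow]
  split_ifs with hdvd
  · simp [(hζ.zpow_eq_one_iff_dvd z).mpr hdvd]
  · have hne : ζ ^ z ≠ 1 := mt (hζ.zpow_eq_one_iff_dvd z).mp hdvd
    have hpow_m : (ζ ^ z) ^ m = 1 := by
      rw [← zpow_natCast, ← zpow_mul, mul_comm, zpow_mul, zpow_natCast, hζ.pow_eq_one, one_zpow]
    rw [geom_sum_eq hne, hpow_m, sub_self, zero_div]

lemma sum_range_exp_mul_exp_neg {m j k : ℕ} (hj : j < m) (hk : k < m) :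
    ∑ l ∈ range m, exp (2 * π * I * j * l / m) * exp (-(2 * π * I * k * l) / m) =
      if j = k then (m : ℂ) else 0 := by
  have hexp : ∀ l : ℕ, exp (2 * π * I * j * l / m) * exp (-(2 * π * I * k * l) / m) =
      exp (2 * π * I * ((j - k : ℤ) : ℂ) * l / m) := by
    intro l
    rw [← exp_add]
    push_cast
    ring_nf
  have hdvd : (m : ℤ) ∣ (j - k : ℤ) ↔ j = k := by
    refine ⟨fun h => ?_, fun h => by simp [h]⟩
    have := Int.eq_zero_of_abs_lt_dvd h (by rw [abs_lt]; omega)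
    omega
  simp only [hexp, sum_range_exp_int_mul_div (by omega : m ≠ 0), hdvd]

lemma conj_exp_two_pi_I_mul_div (m i l : ℕ) :
    conj (exp (2 * π * I * i * l / m)) = exp (-(2 * π * I * i * l) / m) := by
  rw [← exp_conj]
  simp [map_div₀, map_ofNat, conj_I, neg_div]

noncomputable def idft (m : ℕ) (w : ℕ → ℂ) (l : ℕ) : ℂ :=
  (m : ℂ)⁻¹ * ∑ i ∈ range m, exp (2 * π * I * i * l / m) * w i

lemma utilde_eq_idft (m : ℕ) (b : ℕ → ℝ) (u : ℕ → ℂ) :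
    utilde m b u = idft m (fun i => b i * csgn (dft m u i)) := by
  ext l
  simp only [utilde, idft, mul_assoc]

lemma idft_sub (m : ℕ) (v w : ℕ → ℂ) (l : ℕ) :
    idft m (v - w) l = idft m v l - idft m w l := by
  simp only [idft, Pi.sub_apply, mul_sub, sum_sub_distrib]

lemma idft_dft {m l : ℕ} (hl : l < m) (u : ℕ → ℂ) : idft m (dft m u) l = u l := by
  have hinner : ∀ l' ∈ range m,
      ∑ i ∈ range m, exp (2 * π * I * i * l / m) * (u l' * exp (-(2 * π * I * i * l') / m)) =
        u l' * if l = l' then (m : ℂ) else 0 := by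
    intro l' hl'
    rw [← sum_range_exp_mul_exp_neg hl (mem_range.mp hl'), mul_sum]
    refine sum_congr rfl fun i _ => ?_
    rw [mul_right_comm _ (i : ℂ) (l : ℂ), mul_right_comm _ (i : ℂ) (l' : ℂ)]
    ring
  have hsum : ∑ i ∈ range m, exp (2 * π * I * i * l / m) * dft m u i = u l * m := by
    simp only [dft, mul_sum]
    rw [sum_comm, sum_congr rfl hinner]
    simp only [mul_ite, mul_zero]
    rw [sum_ite_eq (range m) l, if_pos (mem_range.mpr hl)]
  have hm : (m : ℂ) ≠ 0 := Nat.cast_ne_zero.mpr (by omega)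
  rw [idft, hsum]
  field_simp

lemma sum_normSq_idft (m : ℕ) (w : ℕ → ℂ) :
    ∑ l ∈ range m, normSq (idft m w l) = (m : ℝ)⁻¹ * ∑ i ∈ range m, normSq (w i) := by
  have hprod : ∀ l, idft m w l * conj (idft m w l) = (m : ℂ)⁻¹ * (m : ℂ)⁻¹ *
      ∑ i ∈ range m, ∑ j ∈ range m,
        w i * conj (w j) * (exp (2 * π * I * i * l / m) * exp (-(2 * π * I * j * l) / m)) := by
    intro l
    rw [idft, map_mul, map_inv₀, map_natCast, map_sum, mul_mul_mul_comm, sum_mul_sum]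
    congr 1
    refine sum_congr rfl fun i _ => sum_congr rfl fun j _ => ?_
    rw [map_mul, conj_exp_two_pi_I_mul_div]
    ring
  have horth : ∀ i ∈ range m, ∑ j ∈ range m, ∑ l ∈ range m,
      w i * conj (w j) * (exp (2 * π * I * i * l / m) * exp (-(2 * π * I * j * l) / m)) =
        w i * conj (w i) * m := by
    intro i hi
    rw [sum_congr rfl fun j hj => by
      rw [← mul_sum, sum_range_exp_mul_exp_neg (mem_range.mp hi) (mem_range.mp hj)]]
    simp only [mul_ite, mul_zero, sum_ite_eq, if_pos hi]
  apply ofReal_injective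
  push_cast
  simp only [← mul_conj, hprod, ← mul_sum]
  rw [sum_comm, sum_congr rfl fun i hi => by rw [sum_comm, horth i hi], ← sum_mul]
  rcases eq_or_ne (m : ℂ) 0 with hm | hm
  · simp [hm]
  · field_simp

lemma normSq_sub_ofReal_mul_csgn (b : ℝ) (z : ℂ) :
    normSq (z - b * csgn z) = (‖z‖ - b) ^ 2 := by
  unfold csgn
  split_ifs with hz
  · simp [hz, normSq_ofReal, sq]
  · have hnorm : ‖z‖ ≠ 0 := norm_ne_zero_iff.mpr hz
    rw [show z - b * (z / ‖z‖) = z * ((1 - b / ‖z‖ : ℝ) : ℂ) by push_cast; ring,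
      normSq_mul, normSq_ofReal, ← Complex.sq_norm]
    field_simp

theorem stmt11_general (m : ℕ) (b : ℕ → ℝ) (u : ℕ → ℂ) :
    (1 / (2 * m) : ℝ) * ∑ i ∈ Finset.range m, (‖dft m u i‖ - b i) ^ 2 =
      (1 / 2 : ℝ) * ∑ l ∈ Finset.range m, ‖u l - utilde m b u l‖ ^ 2 := by
  have hdiff : ∀ l ∈ range m, u l - utilde m b u l =
      idft m (fun i => dft m u i - b i * csgn (dft m u i)) l := by
    intro l hl
    rw [utilde_eq_idft, ← idft_dft (mem_range.mp hl) u, ← idft_sub]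
    rfl
  calc (1 / (2 * m) : ℝ) * ∑ i ∈ range m, (‖dft m u i‖ - b i) ^ 2
      = 1 / (2 * m) * ∑ i ∈ range m, normSq (dft m u i - b i * csgn (dft m u i)) := by
        simp only [normSq_sub_ofReal_mul_csgn]
    _ = 1 / 2 * ∑ l ∈ range m,
          normSq (idft m (fun i => dft m u i - b i * csgn (dft m u i)) l) := by
        rw [sum_normSq_idft]
        ring
    _ = 1 / 2 * ∑ l ∈ range m, ‖u l - utilde m b u l‖ ^ 2 := by
        congr 1
        refine sum_congr rfl fun l hl => ?_
        rw [hdiff l hl, Complex.sq_norm]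

/-- The amplitude loss equals half the squared distance to the phase-matched synthesis:
`f(u) = (1/(2m)) ∑_{i<m} (|(F u)_i| - b_i)² = (1/2) ∑_{l<m} |u_l - ũ_l|²`. -/
theorem stmt11 (m : ℕ) (hm : 1 ≤ m) (b : ℕ → ℝ) (hb : ∀ i, 0 ≤ b i) (u : ℕ → ℂ) :
    (1 / (2 * m) : ℝ) * ∑ i ∈ Finset.range m, (‖dft m u i‖ - b i) ^ 2 =
      (1 / 2 : ℝ) * ∑ l ∈ Finset.range m, ‖u l - utilde m b u l‖ ^ 2 :=
  stmt11_general m b u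
end

section
/- (Theorem 3.1: stationary points are the global optimum with probability 1.) Let n ≥ 1 and k be integers with m = n + k, and suppose k ≥ 3n−2 if m−2n+1 = k−n+1 is odd and k ≥ 3n−1 if k−n+1 is even. Then for Lebesgue-almost every y ∈ ℝ^k (equivalently, with probability 1 when y_1,…,y_k are i.i.d. nondegenerate Gaussian), the following holds: for every x ∈ ℝⁿ, setting z = (x_1,…,x_n, y_1,…,y_k) ∈ ℝ^m and b_i = |(F z)_i| for i = 0,…,m−1, every u ∈ ℝ^m whose last k entries equal y (u_{n+l} = y_l for l = 1,…,k) and which satisfies the stationarity condition u = ũ (where ũ is the phase-matched synthesis of u with magnitudes b) must equal z, i.e. the stationary point is the unique global optimum of the loss f over the constraint set Ω = {u : u_{n+l} = y_l}. -/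
open MeasureTheory

/-!
At a stationary point `u = ũ` the Fourier transform of `u` is `b · sgn (F u)`, so `|F u| = b = |F z|`,
and by Wiener–Khinchin `u` and `z` have the same cyclic autocorrelation. As `u - z` is supported on
the first `n` entries, comparing the autocorrelations at the shifts `n + K - q` (`K = k - n`,
`q < n`) gives a square linear system for `u - z` whose matrix has entries `y (p + K - q) + y (p + q)`.
Its determinant is a polynomial in `y`; at `y = e_K` the matrix is diagonal with entries `1` or `2`
(this is where `K ≥ 2n - 2` enters), so the polynomial is nonzero and vanishes only on a null set.
-/

open Finset
open scoped ZMod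

lemma ZMod.sum_eq_sum_range {M : Type*} [AddCommMonoid M] {m : ℕ} [NeZero m] (g : ZMod m → M) :
    ∑ j, g j = ∑ l ∈ range m, g l :=
  sum_nbij' ZMod.val (↑) (by simp [ZMod.val_lt]) (by simp) (by simp)
    (fun l hl => ZMod.val_cast_of_lt (mem_range.1 hl)) (by simp)

lemma dft_eq_zmod_dft {m : ℕ} [NeZero m] (w : ℕ → ℂ) (i : ℕ) :
    dft m w i = 𝓕 (fun j : ZMod m => w j.val) i := by
  rw [ZMod.dft_apply, ZMod.sum_eq_sum_range, dft]
  refine sum_congr rfl fun l hl => ?_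
  rw [ZMod.val_cast_of_lt (mem_range.1 hl), smul_eq_mul, mul_comm,
    show -((l : ZMod m) * i) = ((-(l * i : ℤ) : ℤ) : ZMod m) by push_cast; ring,
    ZMod.stdAddChar_coe]
  congr 2
  push_cast
  ring

lemma utilde_eq_invDFT {m : ℕ} [NeZero m] (b : ℕ → ℝ) (u : ℕ → ℂ) (l : ℕ) :
    utilde m b u l = 𝓕⁻ (fun j : ZMod m => (b j.val : ℂ) * csgn (dft m u j.val)) l := by
  rw [ZMod.invDFT_apply, ZMod.sum_eq_sum_range, utilde, smul_eq_mul]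
  congr 1
  refine sum_congr rfl fun i hi => ?_
  rw [ZMod.val_cast_of_lt (mem_range.1 hi), smul_eq_mul, ← mul_assoc,
    show (i : ZMod m) * l = ((i * l : ℤ) : ZMod m) by push_cast; ring, ZMod.stdAddChar_coe]
  congr 3
  push_cast
  ring

lemma norm_csgn (w : ℂ) : ‖csgn w‖ = 1 := by
  unfold csgn
  split_ifs with h
  · exact norm_one
  · rw [norm_div, Complex.norm_real, norm_norm, div_self (norm_ne_zero_iff.2 h)]

lemma norm_dft_eq_of_eq_utilde {m : ℕ} (b : ℕ → ℝ) (u : ℕ → ℂ)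
    (hfix : ∀ l < m, u l = utilde m b u l) {i : ℕ} (hi : i < m) : ‖dft m u i‖ = |b i| := by
  have : NeZero m := ⟨by omega⟩
  set Ψ := fun j : ZMod m => (b j.val : ℂ) * csgn (dft m u j.val)
  have hinv : (fun j : ZMod m => u j.val) = 𝓕⁻ Ψ := funext fun j => by
    rw [hfix _ (ZMod.val_lt j), utilde_eq_invDFT, ZMod.natCast_zmod_val]
  have hphase : dft m u i = b i * csgn (dft m u i) := by
    conv_lhs => rw [dft_eq_zmod_dft, hinv, LinearEquiv.apply_symm_apply]
    simp only [Ψ, ZMod.val_cast_of_lt hi]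
  rw [hphase, norm_mul, norm_csgn, mul_one, Complex.norm_real, Real.norm_eq_abs]

noncomputable def cyclicAutocorr {N : ℕ} [NeZero N] (Φ : ZMod N → ℂ) (t : ZMod N) : ℂ :=
  ∑ j, Φ (j + t) * starRingEnd ℂ (Φ j)

lemma dft_cyclicAutocorr {N : ℕ} [NeZero N] (Φ : ZMod N → ℂ) (k : ZMod N) :
    𝓕 (cyclicAutocorr Φ) k = (‖𝓕 Φ k‖ : ℂ) ^ 2 := by
  rw [← Complex.mul_conj', ZMod.dft_apply, ZMod.dft_apply, map_sum, sum_mul_sum]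
  simp only [cyclicAutocorr, smul_eq_mul, mul_sum]
  rw [sum_comm]
  conv_rhs => rw [sum_comm]
  refine sum_congr rfl fun j _ => Fintype.sum_equiv (Equiv.addLeft j) _ _ fun t => ?_
  rw [Equiv.coe_addLeft, map_mul, AddChar.map_neg_eq_conj _ (j * k), Complex.conj_conj,
    show -(t * k) = -((j + t) * k) + j * k by ring, AddChar.map_add_eq_mul]
  ring

lemma cyclicAutocorr_eq_of_norm_dft_eq {N : ℕ} [NeZero N] {Φ Ψ : ZMod N → ℂ}
    (h : ∀ k, ‖𝓕 Φ k‖ = ‖𝓕 Ψ k‖) : cyclicAutocorr Φ = cyclicAutocorr Ψ :=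
  ZMod.dft.injective <| funext fun k => by rw [dft_cyclicAutocorr, dft_cyclicAutocorr, h]

lemma cyclicAutocorr_sub {N : ℕ} [NeZero N] (Φ Ψ : ZMod N → ℂ) (t : ZMod N) :
    cyclicAutocorr Φ t - cyclicAutocorr Ψ t =
      ∑ j, ((Φ j - Ψ j) * starRingEnd ℂ (Φ (j - t)) + Ψ (j + t) * starRingEnd ℂ (Φ j - Ψ j)) := by
  rw [sum_add_distrib, ← _root_.Equiv.sum_comp (Equiv.addRight t), cyclicAutocorr, cyclicAutocorr,
    ← sum_sub_distrib, ← sum_add_distrib]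
  refine sum_congr rfl fun j _ => ?_
  simp only [Equiv.coe_addRight, add_sub_cancel_right, map_sub]
  ring

lemma sum_mul_sub_eq_zero_of_cyclicAutocorr_eq {n m : ℕ} [NeZero m] {u z : ℕ → ℝ}
    (hagree : ∀ l, n ≤ l → l < m → u l = z l)
    (hcorr : cyclicAutocorr (fun j : ZMod m => (u j.val : ℂ)) =
      cyclicAutocorr (fun j : ZMod m => (z j.val : ℂ)))
    {t : ℕ} (ht : n ≤ t) (htm : t + n ≤ m) :
    ∑ p ∈ range n, (z (p + t) + z (p + (m - t))) * (u p - z p) = 0 := by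
  have h := congrFun hcorr t
  rw [← sub_eq_zero, cyclicAutocorr_sub, ZMod.sum_eq_sum_range,
    ← sum_subset (range_subset_range.2 (show n ≤ m by omega))] at h
  · apply Complex.ofReal_injective
    rw [Complex.ofReal_sum, Complex.ofReal_zero, ← h]
    refine sum_congr rfl fun p hp => ?_
    have hp := mem_range.1 hp
    have hsub : ((p : ZMod m) - t).val = p + (m - t) := by
      rw [show (p : ZMod m) - t = ((p + (m - t) : ℕ) : ZMod m) by
        rw [Nat.cast_add, Nat.cast_sub (by omega), ZMod.natCast_self]; ring]
      exact ZMod.val_cast_of_lt (by omega)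
    rw [← Nat.cast_add, ZMod.val_cast_of_lt (show p < m by omega),
      ZMod.val_cast_of_lt (show p + t < m by omega), hsub,
      hagree (p + (m - t)) (by omega) (by omega)]
    simp only [map_sub, Complex.conj_ofReal, Complex.ofReal_mul, Complex.ofReal_add,
      Complex.ofReal_sub]
    ring
  · intro l hl hln
    have hl := mem_range.1 hl
    rw [ZMod.val_cast_of_lt hl, hagree l (by simpa using hln) hl]
    simp

theorem MvPolynomial.ae_eval_ne_zero :
    ∀ {k : ℕ} {P : MvPolynomial (Fin k) ℝ}, P ≠ 0 → ∀ᵐ y : Fin k → ℝ, eval y P ≠ 0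
  | 0, P, hP => by
    obtain ⟨c, rfl⟩ := C_surjective (Fin 0) P
    exact .of_forall fun y => by simpa using hP
  | k + 1, P, hP => by
    set Q := finSuccEquiv ℝ k P
    obtain ⟨j, hj⟩ : ∃ j, Q.coeff j ≠ 0 := by
      by_contra! h
      exact hP ((finSuccEquiv ℝ k).map_eq_zero_iff.1 (Polynomial.ext h))
    have hzero : MeasurableSet {y : Fin (k + 1) → ℝ | eval y P ≠ 0} :=
      (continuous_eval P).measurable (measurableSet_singleton 0).compl
    set e := MeasurableEquiv.piFinSuccAbove (fun _ : Fin (k + 1) => ℝ) 0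
    have he := (volume_preserving_piFinSuccAbove (fun _ : Fin (k + 1) => ℝ) 0).symm
    rw [← he.map_eq, ae_map_iff he.measurable.aemeasurable hzero, Measure.volume_eq_prod,
      Measure.ae_prod_iff_ae_ae (p := fun q => eval (e.symm q) P ≠ 0) (he.measurable hzero),
      Measure.ae_ae_comm (p := fun a s => eval (e.symm (a, s)) P ≠ 0) (he.measurable hzero)]
    filter_upwards [ae_eval_ne_zero hj] with s hs
    have hQs : Q.map (eval s) ≠ 0 := fun h =>
      hs (by rw [← Polynomial.coeff_map, h, Polynomial.coeff_zero])
    filter_upwards [measure_eq_zero_iff_ae_notMem.1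
      ((Polynomial.finite_setOfPred_isRoot hQs).measure_zero volume)] with a ha
    rw [MeasurableEquiv.piFinSuccAbove_symm_apply, Fin.insertNthEquiv_zero]
    change eval (Fin.cons a s) P ≠ 0
    simpa [eval_eq_eval_mv_eval'] using ha

/-- Row `q` is the linearisation in `u - z` of the autocorrelation at the shift `n + K - q`. -/
def autocorrMatrix {R : Type*} [Add R] (n K : ℕ) (y : ℕ → R) : Matrix (Fin n) (Fin n) R :=
  Matrix.of fun q p => y (p + (K - q)) + y (p + q)

lemma mulVec_autocorrMatrix_sub_eq_zero {n k : ℕ} [NeZero (n + k)] (hnk : 2 * n ≤ k + 1) {Y u z : ℕ → ℝ}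
    (hzY : ∀ j, z (n + j) = Y j) (hagree : ∀ l, n ≤ l → l < n + k → u l = z l)
    (hcorr : cyclicAutocorr (fun j : ZMod (n + k) => (u j.val : ℂ)) =
      cyclicAutocorr (fun j : ZMod (n + k) => (z j.val : ℂ))) :
    (autocorrMatrix n (k - n) Y).mulVec (fun p => u p - z p) = 0 := by
  funext q
  have hq := q.2
  simp only [Matrix.mulVec, dotProduct, autocorrMatrix, Matrix.of_apply, Pi.zero_apply]
  rw [← sum_mul_sub_eq_zero_of_cyclicAutocorr_eq hagree hcorr
    (t := n + (k - n - q)) (by omega) (by omega), ← Fin.sum_univ_eq_sum_range]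
  refine sum_congr rfl fun p _ => ?_
  rw [show n + k - (n + (k - n - q)) = n + q by omega, add_left_comm (p : ℕ) n,
    add_left_comm (p : ℕ) n, hzY, hzY]

lemma autocorrMatrix_single {R : Type*} [Semiring R] {n K : ℕ} (hK : 2 * n ≤ K + 2) :
    autocorrMatrix n K (Pi.single K 1 : ℕ → R) =
      Matrix.diagonal fun q : Fin n => if 2 * (q : ℕ) = K then 2 else 1 := by
  ext q p
  have := q.2
  have := p.2
  simp only [autocorrMatrix, Matrix.of_apply, Pi.single_apply, Matrix.diagonal_apply]
  by_cases hqp : q = p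
  · subst hqp
    rw [if_pos (by omega), if_pos rfl]
    by_cases h2 : 2 * (q : ℕ) = K
    · rw [if_pos (by omega), if_pos h2, one_add_one_eq_two]
    · rw [if_neg (by omega), if_neg h2, add_zero]
  · have hqp' : (q : ℕ) ≠ p := Fin.val_ne_of_ne hqp
    rw [if_neg (by omega), if_neg (by omega), if_neg hqp, add_zero]

lemma autocorrMatrix_map {R S : Type*} [Semiring R] [Semiring S] (f : R →+* S) (n K : ℕ)
    (y : ℕ → R) : f.mapMatrix (autocorrMatrix n K y) = autocorrMatrix n K (f ∘ y) := by
  ext q p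
  simp [autocorrMatrix]

lemma ae_det_autocorrMatrix_ne_zero {n K k : ℕ} (hK : 2 * n ≤ K + 2) (hk : K + n ≤ k) :
    ∀ᵐ y : Fin k → ℝ, (autocorrMatrix n K fun j => if h : j < k then y ⟨j, h⟩ else 0).det ≠ 0 := by
  set X : ℕ → MvPolynomial (Fin k) ℝ := fun j => if h : j < k then .X ⟨j, h⟩ else 0
  have heval (y : Fin k → ℝ) : MvPolynomial.eval y (autocorrMatrix n K X).det =
      (autocorrMatrix n K fun j => if h : j < k then y ⟨j, h⟩ else 0).det := by
    rw [RingHom.map_det, autocorrMatrix_map]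
    congr 2
    funext j
    simp only [Function.comp_apply, X]
    split_ifs <;> simp
  have hP : (autocorrMatrix n K X).det ≠ 0 := by
    intro h
    have h0 := heval fun j => (Pi.single K 1 : ℕ → ℝ) j
    have hmat : (autocorrMatrix n K fun j => if h : j < k then Pi.single K (1 : ℝ) j else 0) =
        autocorrMatrix n K (Pi.single K 1) := by
      ext q p
      have := q.2
      have := p.2
      simp only [autocorrMatrix, Matrix.of_apply, dif_pos (show p + (K - q) < k by omega),
        dif_pos (show (p : ℕ) + q < k by omega)]
    rw [h, map_zero, hmat, autocorrMatrix_single hK, Matrix.det_diagonal] at h0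
    exact prod_ne_zero_iff.2 (fun q _ => by split_ifs <;> norm_num) h0.symm
  filter_upwards [MvPolynomial.ae_eval_ne_zero hP] with y hy
  rwa [← heval]

theorem stmt14_general (n k : ℕ)
    (hodd : Odd (k - n + 1) → 3 * n - 2 ≤ k)
    (heven : ¬ Odd (k - n + 1) → 3 * n - 1 ≤ k) :
    ∀ᵐ y : Fin k → ℝ ∂volume,
      ∀ x u : ℕ → ℝ,
        (∀ l : Fin k, u (n + l.1) = y l) →
        (∀ l < n + k,
          (u l : ℂ) =
            utilde (n + k)
              (fun i => ‖dft (n + k)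
                (fun p =>
                  ((zhatR n k (fun j => if h : j < k then y ⟨j, h⟩ else 0) x p : ℝ) : ℂ)) i‖)
              (fun p => (u p : ℂ)) l) →
        ∀ i < n + k,
          u i = zhatR n k (fun j => if h : j < k then y ⟨j, h⟩ else 0) x i := by
  have hK : 2 * n ≤ k - n + 2 ∧ n ≤ k := by
    by_cases h : Odd (k - n + 1)
    · have := hodd h; omega
    · have := heven h; omega
  filter_upwards [ae_det_autocorrMatrix_ne_zero hK.1 (show k - n + n ≤ k by omega)] with y hy
  intro x u hu hfix i hi
  have : NeZero (n + k) := ⟨by omega⟩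
  set Y : ℕ → ℝ := fun j => if h : j < k then y ⟨j, h⟩ else 0
  set z := zhatR n k Y x
  have hzY (j : ℕ) : z (n + j) = Y j := by
    simp only [z, zhatR, Y, Nat.add_sub_cancel_left]
    split_ifs <;> first | omega | rfl
  have hagree (l : ℕ) (h1 : n ≤ l) (h2 : l < n + k) : u l = z l := by
    obtain ⟨j, rfl⟩ := Nat.exists_eq_add_of_le h1
    rw [hzY, hu ⟨j, by omega⟩]
    simp only [Y, dif_pos (show j < k by omega)]
  have hcorr := cyclicAutocorr_eq_of_norm_dft_eq (Φ := fun j : ZMod (n + k) => (u j.val : ℂ))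
      (Ψ := fun j => (z j.val : ℂ)) fun j => by
    rw [← ZMod.natCast_zmod_val j, ← dft_eq_zmod_dft (fun p => (u p : ℂ)),
      ← dft_eq_zmod_dft (fun p => (z p : ℂ)),
      norm_dft_eq_of_eq_utilde _ _ hfix (ZMod.val_lt j), abs_norm]
  have hd := Matrix.eq_zero_of_mulVec_eq_zero hy
    (mulVec_autocorrMatrix_sub_eq_zero (by omega) hzY hagree hcorr)
  by_cases hin : i < n
  · exact sub_eq_zero.1 (congrFun hd ⟨i, hin⟩)
  · exact hagree i (by omega) hi

/-- Theorem 3.1: with `m = n + k`, `k ≥ 3n-2` if `m - 2n + 1 = k - n + 1` is odd and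
`k ≥ 3n-1` if it is even, for Lebesgue-almost every background `y ∈ ℝᵏ` the following
holds: for every signal `x ∈ ℝⁿ`, with measurements `b_i = |(F z)_i|` for
`z = (x; y) ∈ ℝ^m`, every `u ∈ ℝ^m` whose last `k` entries equal `y` and which satisfies
the stationarity (fixed-point) condition `u = ũ` must equal `z` — the stationary point is
the unique global optimum of the loss over the constraint set `Ω`. -/
theorem stmt14 (n k : ℕ) (hn : 1 ≤ n)
    (hodd : Odd (k - n + 1) → 3 * n - 2 ≤ k)
    (heven : ¬ Odd (k - n + 1) → 3 * n - 1 ≤ k) :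
    ∀ᵐ y : Fin k → ℝ ∂volume,
      ∀ x u : ℕ → ℝ,
        (∀ l : Fin k, u (n + l.1) = y l) →
        (∀ l < n + k,
          (u l : ℂ) =
            utilde (n + k)
              (fun i => ‖dft (n + k)
                (fun p =>
                  ((zhatR n k (fun j => if h : j < k then y ⟨j, h⟩ else 0) x p : ℝ) : ℂ)) i‖)
              (fun p => (u p : ℂ)) l) →
        ∀ i < n + k,
          u i = zhatR n k (fun j => if h : j < k then y ⟨j, h⟩ else 0) x i :=
  stmt14_general n k hodd heven
end
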